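/- arXiv:2212.11882 — 7 statements merged into one kernel-verified Lean document; each statement's English description precedes it below -/
import Mathlib

section
/- Let G=(V,E) be a finite graph with positive edge weights W and let m ≥ 1 be a natural number. Let G'=(V',E') be the m-fold blow-up of G: V' = V × {1,…,m}, and each edge e={u,v} ∈ E of weight W_e is replaced by the m² edges {(u,i),(v,j)} for i,j ∈ {1,…,m}, each of weight W_e. If MSVC(G) ≤ τ·|V|·W_G(E) for some real τ > 0, then MSVC(G') ≤ τ·|V'|·W_{G'}(E'). -/
/-!
Order `V × Fin m` by listing, for `k = 1, …, |V|`, the `m` copies of the `k`-th vertex of an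
ordering `σ` of `G`. A copy of a vertex at position `k` then sits at position at most `m k`, so
every edge of the blow-up is covered at most `m` times later than its parent edge was. Each edge
of `G` has `m²` copies, hence `SVC_{G'} ≤ m³ SVC_G(σ)`, while the bound `τ |V'| W_{G'}(E')` is
exactly `m³` times `τ |V| W_G(E)`.
-/

/-- The position (in `{1, …, n}`) at which vertex `v` is visited by the ordering `σ`. -/
def vertexPos {V : Type*} [Fintype V] (σ : Fin (Fintype.card V) ≃ V) (v : V) : ℕ :=
  (σ.symm v : ℕ) + 1

/-- The cover time `c_{σ,e}` of an edge with endpoints `u` and `w` under the ordering `σ`. -/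
def coverTime {V : Type*} [Fintype V] (σ : Fin (Fintype.card V) ≃ V) (u w : V) : ℕ :=
  min (vertexPos σ u) (vertexPos σ w)

/-- The sum vertex cover value `SVC_G(σ) = Σ_e W_e · c_{σ,e}` of a weighted multigraph whose
edges are indexed by `ι`, with endpoint maps `a b : ι → V` and weights `W`. -/
noncomputable def SVC {V ι : Type*} [Fintype V] [Fintype ι]
    (a b : ι → V) (W : ι → ℝ) (σ : Fin (Fintype.card V) ≃ V) : ℝ :=
  ∑ e : ι, W e * (coverTime σ (a e) (b e) : ℝ)

open Finset

section Blowup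

variable {V : Type*} [Fintype V]

lemma card_prod_fin (m : ℕ) : Fintype.card (V × Fin m) = Fintype.card V * m := by
  simp

def blowupOrder (σ : Fin (Fintype.card V) ≃ V) (m : ℕ) :
    Fin (Fintype.card (V × Fin m)) ≃ V × Fin m :=
  (finCongr (card_prod_fin m)).trans
    (finProdFinEquiv.symm.trans (σ.prodCongr (Equiv.refl (Fin m))))

lemma vertexPos_blowupOrder (σ : Fin (Fintype.card V) ≃ V) {m : ℕ} (v : V) (i : Fin m) :
    vertexPos (blowupOrder σ m) (v, i) = (i : ℕ) + m * (σ.symm v : ℕ) + 1 := by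
  simp [vertexPos, blowupOrder, finProdFinEquiv]

lemma vertexPos_blowupOrder_le (σ : Fin (Fintype.card V) ≃ V) {m : ℕ} (v : V) (i : Fin m) :
    vertexPos (blowupOrder σ m) (v, i) ≤ m * vertexPos σ v := by
  rw [vertexPos_blowupOrder, vertexPos, Nat.mul_succ]
  have := i.isLt
  omega

lemma coverTime_blowupOrder_le (σ : Fin (Fintype.card V) ≃ V) {m : ℕ} (u w : V)
    (i j : Fin m) :
    coverTime (blowupOrder σ m) (u, i) (w, j) ≤ m * coverTime σ u w := by
  rw [coverTime, coverTime, ← Nat.mul_min_mul_left]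
  exact min_le_min (vertexPos_blowupOrder_le σ u i) (vertexPos_blowupOrder_le σ w j)

lemma sum_prod_fin_fin_fst {ι : Type*} [Fintype ι] (m : ℕ) (g : ι → ℝ) :
    ∑ p : ι × Fin m × Fin m, g p.1 = (m : ℝ) ^ 2 * ∑ e, g e := by
  rw [Fintype.sum_prod_type, mul_sum]
  simp [sq, mul_comm]

lemma SVC_blowup_le {ι : Type*} [Fintype ι] (a b : ι → V) (W : ι → ℝ) (hW : ∀ e, 0 ≤ W e)
    (σ : Fin (Fintype.card V) ≃ V) (m : ℕ) :
    SVC (fun p : ι × Fin m × Fin m => (a p.1, p.2.1))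
        (fun p : ι × Fin m × Fin m => (b p.1, p.2.2))
        (fun p : ι × Fin m × Fin m => W p.1) (blowupOrder σ m) ≤
      (m : ℝ) ^ 3 * SVC a b W σ :=
  calc _ ≤ ∑ p : ι × Fin m × Fin m, (m : ℝ) * (W p.1 * coverTime σ (a p.1) (b p.1)) := by
        refine sum_le_sum fun p _ => ?_
        have hcover : (coverTime (blowupOrder σ m) (a p.1, p.2.1) (b p.1, p.2.2) : ℝ) ≤
            m * coverTime σ (a p.1) (b p.1) := by
          exact_mod_cast coverTime_blowupOrder_le σ _ _ _ _
        nlinarith [hW p.1]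
    _ = (m : ℝ) ^ 3 * SVC a b W σ := by
        rw [← mul_sum, sum_prod_fin_fin_fst m (fun e => W e * coverTime σ (a e) (b e)), SVC]
        ring

end Blowup

theorem blowup_completeness_general {V ι : Type*} [Fintype V] [Fintype ι]
    (a b : ι → V) (W : ι → ℝ) (hW : ∀ e, 0 < W e)
    (m : ℕ) (τ : ℝ)
    (h : ∃ σ : Fin (Fintype.card V) ≃ V,
      SVC a b W σ ≤ τ * (Fintype.card V : ℝ) * ∑ e : ι, W e) :
    ∃ σ' : Fin (Fintype.card (V × Fin m)) ≃ V × Fin m,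
      SVC (fun p : ι × Fin m × Fin m => (a p.1, p.2.1))
          (fun p : ι × Fin m × Fin m => (b p.1, p.2.2))
          (fun p : ι × Fin m × Fin m => W p.1) σ' ≤
        τ * (Fintype.card (V × Fin m) : ℝ) * ∑ p : ι × Fin m × Fin m, W p.1 := by
  obtain ⟨σ, hσ⟩ := h
  refine ⟨blowupOrder σ m, ?_⟩
  have hbound : τ * (Fintype.card (V × Fin m) : ℝ) * ∑ p : ι × Fin m × Fin m, W p.1 =
      (m : ℝ) ^ 3 * (τ * Fintype.card V * ∑ e, W e) := by
    rw [sum_prod_fin_fin_fst, card_prod_fin]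
    push_cast
    ring
  calc _ ≤ (m : ℝ) ^ 3 * SVC a b W σ := SVC_blowup_le a b W (fun e => (hW e).le) σ m
    _ ≤ _ := by rw [hbound]; gcongr

/-- Let `G` be a finite graph with positive edge weights and let `G'` be its
`m`-fold blow-up: vertices `V × Fin m`, and each edge `e = {u,v}` of weight `W e` replaced by
the `m²` edges `{(u,i),(v,j)}`, each of weight `W e`.  If `MSVC(G) ≤ τ·|V|·W_G(E)` (i.e. some
ordering achieves this value) then `MSVC(G') ≤ τ·|V'|·W_{G'}(E')`. -/
theorem blowup_completeness {V ι : Type*} [Fintype V] [Fintype ι]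
    (a b : ι → V) (W : ι → ℝ) (hW : ∀ e, 0 < W e)
    (m : ℕ) (hm : 1 ≤ m) (τ : ℝ) (hτ : 0 < τ)
    (h : ∃ σ : Fin (Fintype.card V) ≃ V,
      SVC a b W σ ≤ τ * (Fintype.card V : ℝ) * ∑ e : ι, W e) :
    ∃ σ' : Fin (Fintype.card (V × Fin m)) ≃ V × Fin m,
      SVC (fun p : ι × Fin m × Fin m => (a p.1, p.2.1))
          (fun p : ι × Fin m × Fin m => (b p.1, p.2.2))
          (fun p : ι × Fin m × Fin m => W p.1) σ' ≤
        τ * (Fintype.card (V × Fin m) : ℝ) * ∑ p : ι × Fin m × Fin m, W p.1 :=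
  blowup_completeness_general a b W hW m τ h
end

section
/- Let q ∈ ℕ_{>0}, let ε ∈ (0,1/2) be a rational number with ε·q ∈ ℕ, and let 0 < W_min < W_max < 1. Then there exists a sufficiently large m ∈ ℕ such that for every rational p ∈ [W_min, W_max] with p·q ∈ ℕ: (1+ε)·p·m is an integer, and there exists a bipartite multigraph H' on vertex sets A ⊔ B with |A| = |B| = m in which every vertex has degree exactly (1+ε)·p·m, and such that for all subsets S_A ⊆ A and S_B ⊆ B, the number of edges of H' between S_A and S_B (counted with multiplicity) differs from p·|S_A|·|S_B| by at most 3·ε·m²·p. -/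
/-- indicator of `val < τ` on `ZMod n` -/
def ivl (n τ : ℕ) (x : ZMod n) : ℕ := if x.val < τ then 1 else 0

lemma ivl_le_one (n τ : ℕ) (x : ZMod n) : ivl n τ x ≤ 1 := by
  unfold ivl; split <;> simp

lemma cnt_val_lt (n τ : ℕ) [NeZero n] (hτ : τ ≤ n) :
    ∑ x : ZMod n, ivl n τ x = τ := by
  simp only [ivl]
  rw [Finset.sum_boole]
  norm_cast
  rw [← Finset.card_range τ]
  apply Finset.card_bij' (fun (x : ZMod n) _ => x.val) (fun k _ => (k : ZMod n))
  · intro x hx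
    simp only [Finset.mem_filter] at hx
    simpa using hx.2
  · intro k hk
    simp only [Finset.mem_range] at hk
    simp [ZMod.val_cast_of_lt (lt_of_lt_of_le hk hτ), hk]
  · intro x _
    exact ZMod.natCast_rightInverse x
  · intro k hk
    simp only [Finset.mem_range] at hk
    exact ZMod.val_cast_of_lt (lt_of_lt_of_le hk hτ)

lemma sum_shift {n : ℕ} [NeZero n] {M : Type*} [AddCommMonoid M] (s : ZMod n) (f : ZMod n → M) :
    ∑ b : ZMod n, f (b + s) = ∑ b, f b :=
  Equiv.sum_comp (Equiv.addRight s) f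

lemma sum_affine {n : ℕ} [Fact n.Prime] {M : Type*} [AddCommMonoid M]
    (v u : ZMod n) (hu : u ≠ 0) (f : ZMod n → M) :
    ∑ a : ZMod n, f (v - a * u) = ∑ b, f b := by
  haveI : NeZero n := ⟨(Fact.out : n.Prime).pos.ne'⟩
  have := Equiv.sum_comp ((Equiv.mulRight₀ u hu).trans
    ((Equiv.neg (ZMod n)).trans (Equiv.addLeft v))) f
  simpa [sub_eq_add_neg] using this

/-- the pseudorandom incidence function (affine-plane incidence with thick
residue window), on `ZMod n × ZMod n × Fin Q`. -/
def Av (n Q τ : ℕ) (v w : ZMod n × ZMod n × Fin Q) : ℕ :=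
  ivl n τ (v.2.1 + w.2.1 - v.1 * w.1)

lemma Av_le_one (n Q τ : ℕ) (v w : ZMod n × ZMod n × Fin Q) : Av n Q τ v w ≤ 1 :=
  ivl_le_one _ _ _

lemma Av_row (n Q τ : ℕ) [Fact n.Prime] (hτ : τ ≤ n) (v : ZMod n × ZMod n × Fin Q) :
    ∑ w : ZMod n × ZMod n × Fin Q, Av n Q τ v w = n * (Q * τ) := by
  haveI : NeZero n := ⟨(Fact.out : n.Prime).pos.ne'⟩
  obtain ⟨a, b, k⟩ := v
  rw [Fintype.sum_prod_type]
  have step1 : ∀ c : ZMod n, ∑ y : ZMod n × Fin Q, Av n Q τ (a,b,k) (c, y) = Q * τ := by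
    intro c
    rw [Fintype.sum_prod_type]
    have step2 : ∀ e : ZMod n, ∑ l : Fin Q, Av n Q τ (a,b,k) (c,e,l)
        = Q * ivl n τ (e + (b - a*c)) := by
      intro e
      simp only [Av]
      rw [Fin.sum_const, smul_eq_mul,
        show b + e - a*c = e + (b - a*c) from by ring]
    rw [Finset.sum_congr rfl fun e _ => step2 e, ← Finset.mul_sum,
      sum_shift (b - a*c) (ivl n τ), cnt_val_lt n τ hτ]
  rw [Finset.sum_congr rfl fun c _ => step1 c, Finset.sum_const, Finset.card_univ,
    ZMod.card, smul_eq_mul]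

lemma Av_col (n Q τ : ℕ) [Fact n.Prime] (hτ : τ ≤ n) (w : ZMod n × ZMod n × Fin Q) :
    ∑ v : ZMod n × ZMod n × Fin Q, Av n Q τ v w = n * (Q * τ) := by
  haveI : NeZero n := ⟨(Fact.out : n.Prime).pos.ne'⟩
  obtain ⟨c, e, l⟩ := w
  rw [Fintype.sum_prod_type]
  have step1 : ∀ a : ZMod n, ∑ y : ZMod n × Fin Q, Av n Q τ (a, y) (c,e,l) = Q * τ := by
    intro a
    rw [Fintype.sum_prod_type]
    have step2 : ∀ b : ZMod n, ∑ k : Fin Q, Av n Q τ (a,b,k) (c,e,l)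
        = Q * ivl n τ (b + (e - a*c)) := by
      intro b
      simp only [Av]
      rw [Fin.sum_const, smul_eq_mul,
        show b + e - a*c = b + (e - a*c) from by ring]
    rw [Finset.sum_congr rfl fun b _ => step2 b, ← Finset.mul_sum,
      sum_shift (e - a*c) (ivl n τ), cnt_val_lt n τ hτ]
  rw [Finset.sum_congr rfl fun a _ => step1 a, Finset.sum_const, Finset.card_univ,
    ZMod.card, smul_eq_mul]

lemma Av_codeg (n Q τ : ℕ) [Fact n.Prime] (hτ : τ ≤ n)
    (w w' : ZMod n × ZMod n × Fin Q) (hcc : w.1 ≠ w'.1) :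
    ∑ v : ZMod n × ZMod n × Fin Q, Av n Q τ v w * Av n Q τ v w' = Q * (τ * τ) := by
  haveI : NeZero n := ⟨(Fact.out : n.Prime).pos.ne'⟩
  obtain ⟨c, e, l⟩ := w
  obtain ⟨c', e', l'⟩ := w'
  simp only [ne_eq] at hcc
  have hu : c' - c ≠ 0 := sub_ne_zero.mpr (fun h => hcc (by simp [h.symm]))
  rw [Fintype.sum_prod_type]
  have step1 : ∀ a : ZMod n,
      ∑ y : ZMod n × Fin Q, Av n Q τ (a, y) (c,e,l) * Av n Q τ (a, y) (c',e',l')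
      = Q * ∑ x : ZMod n, ivl n τ x * ivl n τ ((x + (e' - e)) - a * (c' - c)) := by
    intro a
    rw [Fintype.sum_prod_type]
    have step2 : ∀ b : ZMod n, ∑ k : Fin Q, Av n Q τ (a,b,k) (c,e,l) * Av n Q τ (a,b,k) (c',e',l')
        = Q * ((fun x : ZMod n => ivl n τ x * ivl n τ ((x + (e' - e)) - a * (c' - c)))
            (b + (e - a*c))) := by
      intro b
      simp only [Av]
      rw [Fin.sum_const, smul_eq_mul,
        show b + e - a*c = b + (e - a*c) from by ring,
        show b + e' - a*c' = ((b + (e - a*c)) + (e' - e)) - a * (c' - c) from by ring]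
    rw [Finset.sum_congr rfl fun b _ => step2 b, ← Finset.mul_sum,
      sum_shift (e - a*c) (fun x : ZMod n => ivl n τ x * ivl n τ ((x + (e' - e)) - a * (c' - c)))]
  rw [Finset.sum_congr rfl fun a _ => step1 a, ← Finset.mul_sum, Finset.sum_comm]
  congr 1
  have step3 : ∀ x : ZMod n,
      ∑ a : ZMod n, ivl n τ x * ivl n τ ((x + (e' - e)) - a * (c' - c))
      = ivl n τ x * τ := by
    intro x
    rw [← Finset.mul_sum, sum_affine (x + (e' - e)) (c' - c) hu (ivl n τ),
      cnt_val_lt n τ hτ]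
  rw [Finset.sum_congr rfl fun x _ => step3 x, ← Finset.sum_mul, cnt_val_lt n τ hτ]

lemma fiber_card (n Q : ℕ) [NeZero n] (c : ZMod n) :
    (Finset.univ.filter fun w : ZMod n × ZMod n × Fin Q => w.1 = c).card = n * Q := by
  have : (Finset.univ.filter fun w : ZMod n × ZMod n × Fin Q => w.1 = c)
      = Finset.univ.map ⟨fun y : ZMod n × Fin Q => (c, y),
          fun x y h => by simpa [Prod.ext_iff] using h⟩ := by
    ext w
    simp [Prod.ext_iff, eq_comm]
    constructor
    · rintro rfl; exact ⟨w.2.1, w.2.2, rfl, rfl, rfl⟩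
    · rintro ⟨a, b, h, -, -⟩; exact h.symm
  rw [this, Finset.card_map, Finset.card_univ, Fintype.card_prod, ZMod.card, Fintype.card_fin]

lemma Av_disc (n Q τ : ℕ) [Fact n.Prime] (hτ : τ ≤ n)
    (SA SB : Finset (ZMod n × ZMod n × Fin Q)) :
    (∑ v ∈ SA, ∑ w ∈ SB, ((Av n Q τ v w : ℚ) - τ / n))^2
      ≤ (SA.card : ℚ) * SB.card * (Q^2 * n^2 * τ) := by
  haveI : NeZero n := ⟨(Fact.out : n.Prime).pos.ne'⟩
  have hn0 : (n:ℚ) ≠ 0 := by exact_mod_cast (Fact.out : n.Prime).pos.ne'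
  set g : (ZMod n × ZMod n × Fin Q) → (ZMod n × ZMod n × Fin Q) → ℚ :=
    fun v w => ((Av n Q τ v w : ℚ) - τ / n) with hg
  set h : (ZMod n × ZMod n × Fin Q) → ℚ := fun v => ∑ w ∈ SB, g v w with hh
  have hcast : ∀ w₀, ∑ v : (ZMod n × ZMod n × Fin Q), ((Av n Q τ v w₀ : ℚ))
      = (n : ℚ) * ((Q : ℚ) * (τ : ℚ)) := by
    intro w₀
    have := Av_col n Q τ hτ w₀
    exact_mod_cast congrArg (Nat.cast (R := ℚ)) this
  have hcard : (Fintype.card (ZMod n × ZMod n × Fin Q) : ℚ) = (n:ℚ) * ((n:ℚ) * (Q:ℚ)) := by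
    simp [ZMod.card]
  -- expansion of G
  have Gsplit : ∀ w w', ∑ v : (ZMod n × ZMod n × Fin Q), g v w * g v w'
      = (∑ v : (ZMod n × ZMod n × Fin Q), ((Av n Q τ v w : ℚ) * (Av n Q τ v w')))
        - (Q:ℚ) * (τ:ℚ)^2 := by
    intro w w'
    have e1 : ∀ v, g v w * g v w' = (Av n Q τ v w : ℚ) * (Av n Q τ v w')
        - (τ/n) * (Av n Q τ v w) - (τ/n) * (Av n Q τ v w') + (τ/n)^2 := by
      intro v; simp only [hg]; ring
    rw [Finset.sum_congr rfl fun v _ => e1 v]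
    rw [Finset.sum_add_distrib, Finset.sum_sub_distrib, Finset.sum_sub_distrib,
      ← Finset.mul_sum, ← Finset.mul_sum, Finset.sum_const, Finset.card_univ,
      nsmul_eq_mul, hcast w, hcast w', hcard]
    field_simp
    ring
  have Gzero : ∀ w w' : (ZMod n × ZMod n × Fin Q), w.1 ≠ w'.1 →
      ∑ v : (ZMod n × ZMod n × Fin Q), g v w * g v w' = 0 := by
    intro w w' hne
    rw [Gsplit]
    have h2 : ∑ v : (ZMod n × ZMod n × Fin Q), ((Av n Q τ v w : ℚ) * (Av n Q τ v w'))
        = (Q:ℚ) * ((τ:ℚ) * (τ:ℚ)) := by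
      exact_mod_cast congrArg (Nat.cast (R := ℚ)) (Av_codeg n Q τ hτ w w' hne)
    rw [h2]; ring
  have Gle : ∀ w w', ∑ v : (ZMod n × ZMod n × Fin Q), g v w * g v w'
      ≤ (n:ℚ) * ((Q:ℚ) * (τ:ℚ)) := by
    intro w w'
    rw [Gsplit]
    have codeg_le : ∑ v : (ZMod n × ZMod n × Fin Q), ((Av n Q τ v w : ℚ) * (Av n Q τ v w'))
        ≤ (n:ℚ) * ((Q:ℚ) * (τ:ℚ)) := by
      have hle : ∀ v, ((Av n Q τ v w : ℚ) * (Av n Q τ v w')) ≤ (Av n Q τ v w' : ℚ) := by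
        intro v
        have h1 : (Av n Q τ v w : ℚ) ≤ 1 := by exact_mod_cast Av_le_one n Q τ v w
        have h0 : (0:ℚ) ≤ (Av n Q τ v w : ℚ) := by positivity
        have h0' : (0:ℚ) ≤ (Av n Q τ v w' : ℚ) := by positivity
        nlinarith
      calc ∑ v : (ZMod n × ZMod n × Fin Q), ((Av n Q τ v w : ℚ) * (Av n Q τ v w'))
          ≤ ∑ v : (ZMod n × ZMod n × Fin Q), (Av n Q τ v w' : ℚ) :=
            Finset.sum_le_sum fun v _ => hle v
        _ = (n:ℚ) * ((Q:ℚ) * (τ:ℚ)) := hcast w'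
    have hQτ : (0:ℚ) ≤ (Q:ℚ) * (τ:ℚ)^2 := by positivity
    linarith
  -- Cauchy–Schwarz
  have cs : (∑ v ∈ SA, h v)^2 ≤ (SA.card : ℚ) * ∑ v ∈ SA, (h v)^2 := by
    have := Finset.sum_mul_sq_le_sq_mul_sq SA (fun _ => (1:ℚ)) h
    simpa using this
  have mono : ∑ v ∈ SA, (h v)^2 ≤ ∑ v : (ZMod n × ZMod n × Fin Q), (h v)^2 :=
    Finset.sum_le_sum_of_subset_of_nonneg (Finset.subset_univ SA) (fun _ _ _ => sq_nonneg _)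
  have expand : ∑ v : (ZMod n × ZMod n × Fin Q), (h v)^2
      = ∑ w ∈ SB, ∑ w' ∈ SB, ∑ v : (ZMod n × ZMod n × Fin Q), g v w * g v w' := by
    have e1 : ∀ v, (h v)^2 = ∑ w ∈ SB, ∑ w' ∈ SB, g v w * g v w' := by
      intro v
      rw [hh, sq, Finset.sum_mul_sum]
    rw [Finset.sum_congr rfl fun v _ => e1 v, Finset.sum_comm]
    exact Finset.sum_congr rfl fun w _ => Finset.sum_comm
  have rowbound : ∀ w ∈ SB, ∑ w' ∈ SB, (∑ v : (ZMod n × ZMod n × Fin Q), g v w * g v w')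
      ≤ ((n:ℚ) * (Q:ℚ)) * ((n:ℚ) * ((Q:ℚ) * (τ:ℚ))) := by
    intro w _
    have split : ∑ w' ∈ SB, (∑ v : (ZMod n × ZMod n × Fin Q), g v w * g v w')
        = ∑ w' ∈ SB.filter (fun w' => w'.1 = w.1),
            (∑ v : (ZMod n × ZMod n × Fin Q), g v w * g v w') := by
      rw [← Finset.sum_filter_add_sum_filter_not SB (fun w' => w'.1 = w.1)]
      have hzero : ∑ w' ∈ SB.filter (fun w' => ¬ w'.1 = w.1),
          (∑ v : (ZMod n × ZMod n × Fin Q), g v w * g v w') = 0 := by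
        apply Finset.sum_eq_zero
        intro w' hw'
        exact Gzero w w' (Ne.symm (Finset.mem_filter.mp hw').2)
      rw [hzero, add_zero]
    rw [split]
    have hcard_le : ((SB.filter (fun w' => w'.1 = w.1)).card : ℚ) ≤ (n:ℚ) * (Q:ℚ) := by
      have : (SB.filter (fun w' => w'.1 = w.1)).card
          ≤ (Finset.univ.filter (fun w' : ZMod n × ZMod n × Fin Q => w'.1 = w.1)).card :=
        Finset.card_le_card (Finset.filter_subset_filter _ (Finset.subset_univ SB))
      rw [fiber_card n Q w.1] at this
      exact_mod_cast this
    calc ∑ w' ∈ SB.filter (fun w' => w'.1 = w.1),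
          (∑ v : (ZMod n × ZMod n × Fin Q), g v w * g v w')
        ≤ (SB.filter (fun w' => w'.1 = w.1)).card • ((n:ℚ) * ((Q:ℚ) * (τ:ℚ))) :=
          Finset.sum_le_card_nsmul _ _ _ (fun w' _ => Gle w w')
      _ = ((SB.filter (fun w' => w'.1 = w.1)).card : ℚ) * ((n:ℚ) * ((Q:ℚ) * (τ:ℚ))) := by
          rw [nsmul_eq_mul]
      _ ≤ ((n:ℚ) * (Q:ℚ)) * ((n:ℚ) * ((Q:ℚ) * (τ:ℚ))) := by
          have hnn : (0:ℚ) ≤ (n:ℚ) * ((Q:ℚ) * (τ:ℚ)) := by positivity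
          exact mul_le_mul_of_nonneg_right hcard_le hnn
  have total : ∑ w ∈ SB, ∑ w' ∈ SB, (∑ v : (ZMod n × ZMod n × Fin Q), g v w * g v w')
      ≤ (SB.card : ℚ) * (((n:ℚ) * (Q:ℚ)) * ((n:ℚ) * ((Q:ℚ) * (τ:ℚ)))) := by
    calc ∑ w ∈ SB, ∑ w' ∈ SB, (∑ v : (ZMod n × ZMod n × Fin Q), g v w * g v w')
        ≤ SB.card • (((n:ℚ) * (Q:ℚ)) * ((n:ℚ) * ((Q:ℚ) * (τ:ℚ)))) :=
          Finset.sum_le_card_nsmul _ _ _ rowbound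
      _ = (SB.card : ℚ) * (((n:ℚ) * (Q:ℚ)) * ((n:ℚ) * ((Q:ℚ) * (τ:ℚ)))) := by
          rw [nsmul_eq_mul]
  have hSA0 : (0:ℚ) ≤ (SA.card : ℚ) := by positivity
  calc (∑ v ∈ SA, ∑ w ∈ SB, ((Av n Q τ v w : ℚ) - τ / n))^2
      = (∑ v ∈ SA, h v)^2 := rfl
    _ ≤ (SA.card : ℚ) * ∑ v ∈ SA, (h v)^2 := cs
    _ ≤ (SA.card : ℚ) * ∑ v : (ZMod n × ZMod n × Fin Q), (h v)^2 := by
        exact mul_le_mul_of_nonneg_left mono hSA0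
    _ ≤ (SA.card : ℚ) * ((SB.card : ℚ) * (((n:ℚ) * (Q:ℚ)) * ((n:ℚ) * ((Q:ℚ) * (τ:ℚ))))) := by
        rw [expand]
        exact mul_le_mul_of_nonneg_left total hSA0
    _ = (SA.card : ℚ) * SB.card * (Q^2 * n^2 * τ) := by ring


section arith
private lemma arith1 (e' p' q' : ℚ) (he : 0 < e') (hp : 0 < p') (hq : 0 < q')
    (h1 : 1 ≤ e'*q') (h2 : 1 ≤ p'*q') : 1 ≤ e'*p'*q'^2 := by nlinarith

private lemma arith2 (u n' q' : ℚ) (hu : 0 < u) (hq : 1 ≤ q')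
    (h1 : 1 ≤ u*q'^2) (h2 : q'^4 + 1 ≤ n') : 1 ≤ u^2*n' := by
  nlinarith [sq_nonneg u, mul_pos hu hu]

private lemma arith3 (a b M : ℚ) (ha : 0 ≤ a) (hb : 0 ≤ b) (haM : a ≤ M) (hbM : b ≤ M) :
    a*b ≤ M^2 := by nlinarith

private lemma arith4 (q' n' t' : ℚ) (hq : 0 ≤ q') (hn : 0 ≤ n') (ht : t' ≤ n') :
    (q'^2)^2*n'^2*t' ≤ q'^4*n'^3 := by nlinarith [sq_nonneg (q'^2*n')]

private lemma arith5 (x B : ℚ) (h : x^2 ≤ B^2) (hB : 0 ≤ B) : |x| ≤ B := by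
  nlinarith [sq_abs x, abs_nonneg x]

private lemma arith6 (q' n' : ℚ) (hq : 1 ≤ q') (h : q'^4 + 1 ≤ n') : q'^2 ≤ n' := by nlinarith [sq_nonneg (q'^2 - 1), sq_nonneg q']

private lemma arith7 (u q' n' : ℚ) (hn : 0 ≤ n') (h1 : 1 ≤ u*q'^2) :
    n'^2 ≤ u*(q'^2*n'^2) := by nlinarith [sq_nonneg n']

private lemma arith8 (r' q' n' : ℚ) (hq : 0 ≤ q') (hn : 0 ≤ n') (h1 : r' ≤ n'*q'^2)
    (h2 : q'^2 ≤ n') : r' ≤ n'^2 := by nlinarith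
end arith

set_option maxHeartbeats 1000000 in
/-- Let `q ∈ ℕ_{>0}`, let `ε ∈ (0,1/2)` be rational with `ε·q ∈ ℕ`, and let
`0 < W_min < W_max < 1`.  Then there is a sufficiently large `m` such that for every rational
`p ∈ [W_min, W_max]` with `p·q ∈ ℕ`: `(1+ε)·p·m` is an integer `d`, and there is a bipartite
multigraph `H'` on `A ⊔ B` with `|A| = |B| = m` (given by its multiplicity matrix
`M : Fin m × Fin m → ℕ`) in which every vertex has degree exactly `d = (1+ε)·p·m`, and such
that for all `S_A ⊆ A`, `S_B ⊆ B`, the number of edges of `H'` between `S_A` and `S_B`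
(with multiplicity) differs from `p·|S_A|·|S_B|` by at most `3·ε·m²·p`. -/
theorem regular_gadget_exists (q : ℕ) (hq : 0 < q)
    (ε : ℚ) (hε0 : 0 < ε) (hε1 : ε < 1 / 2) (hεq : ∃ k : ℕ, ε * q = k)
    (Wmin Wmax : ℝ) (hWmin : 0 < Wmin) (hWminmax : Wmin < Wmax) (hWmax : Wmax < 1) :
    ∃ m : ℕ, 0 < m ∧
      ∀ p : ℚ, Wmin ≤ (p : ℝ) → (p : ℝ) ≤ Wmax → (∃ k : ℕ, p * q = k) →
        ∃ d : ℕ, (d : ℚ) = (1 + ε) * p * m ∧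
          ∃ M : Fin m × Fin m → ℕ,
            (∀ i : Fin m, ∑ j : Fin m, M (i, j) = d) ∧
            (∀ j : Fin m, ∑ i : Fin m, M (i, j) = d) ∧
            ∀ SA SB : Finset (Fin m),
              |(∑ i ∈ SA, ∑ j ∈ SB, (M (i, j) : ℚ)) - p * SA.card * SB.card| ≤
                3 * ε * (m : ℚ) ^ 2 * p := by
  obtain ⟨k₁, hk₁⟩ := hεq
  have hqQ : (0:ℚ) < (q:ℚ) := by exact_mod_cast hq
  have hq1 : (1:ℚ) ≤ (q:ℚ) := by exact_mod_cast hq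
  have hk₁pos : (0:ℚ) < (k₁:ℚ) := by rw [← hk₁]; positivity
  have hk₁1 : (1:ℚ) ≤ (k₁:ℚ) := by exact_mod_cast (by exact_mod_cast hk₁pos : 0 < k₁)
  have hεge : 1 ≤ ε * q := by rw [hk₁]; exact hk₁1
  obtain ⟨n, hn_ge, hn_prime⟩ := Nat.exists_infinite_primes (q^4 + 1)
  haveI : Fact n.Prime := ⟨hn_prime⟩
  haveI : NeZero n := ⟨hn_prime.pos.ne'⟩
  have hn0 : (0:ℚ) < (n:ℚ) := by exact_mod_cast hn_prime.pos
  have hnq4 : ((q:ℚ)^4 + 1) ≤ (n:ℚ) := by exact_mod_cast hn_ge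
  set Q : ℕ := q^2 with hQdef
  set m : ℕ := q^2 * n^2 with hmdef
  have hm0 : 0 < m := Nat.mul_pos (pow_pos hq 2) (pow_pos hn_prime.pos 2)
  have hm0' : (0:ℚ) < (m:ℚ) := by exact_mod_cast hm0
  have hmq : (m:ℚ) = (q:ℚ)^2 * (n:ℚ)^2 := by push_cast [hmdef]; ring
  refine ⟨m, hm0, fun p hpmin hpmax hpq => ?_⟩
  obtain ⟨k₂, hk₂⟩ := hpq
  have hp0 : (0:ℚ) < p := by
    have : (0:ℝ) < (p:ℝ) := lt_of_lt_of_le hWmin hpmin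
    exact_mod_cast this
  have hk₂pos : (0:ℚ) < (k₂:ℚ) := by rw [← hk₂]; positivity
  have hk₂1 : (1:ℚ) ≤ (k₂:ℚ) := by exact_mod_cast (by exact_mod_cast hk₂pos : 0 < k₂)
  have hpge : 1 ≤ p * q := by rw [hk₂]; exact hk₂1
  set dd : ℕ := (k₂*q + k₁*k₂) * n^2 with hdd
  have hdq : (dd:ℚ) = (1 + ε) * p * m := by
    push_cast [hdd, hmdef]
    rw [show ((k₁:ℚ)) = ε*q from hk₁.symm, show ((k₂:ℚ)) = p*q from hk₂.symm]
    ring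
  refine ⟨dd, hdq, ?_⟩
  -- digit decomposition
  set a₀ : ℕ := dd / m with ha₀
  set r : ℕ := dd % m with hr
  set τ : ℕ := r / (n*Q) with hτ
  set ρ : ℕ := r % (n*Q) with hρ
  have hnQ0 : 0 < n*Q := Nat.mul_pos hn_prime.pos (pow_pos hq 2)
  have hd : a₀ * m + (τ * (n*Q) + ρ) = dd := by
    rw [hτ, hρ, Nat.div_add_mod', ha₀, hr, Nat.div_add_mod']
  have hτn : τ < n := by
    have hrm : r < m := Nat.mod_lt _ hm0
    have : r < n * (n*Q) := by
      refine lt_of_lt_of_le hrm (le_of_eq ?_)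
      rw [hmdef, hQdef]; ring
    rw [hτ]
    exact Nat.div_lt_of_lt_mul (by rw [mul_comm] at this; exact this)
  have hρn : ρ < n*Q := Nat.mod_lt _ hnQ0
  have hcard : Fintype.card (ZMod n × ZMod n × Fin Q) = m := by
    simp only [Fintype.card_prod, ZMod.card, Fintype.card_fin]
    rw [hmdef, hQdef]; ring
  set e : (ZMod n × ZMod n × Fin Q) ≃ Fin m := Fintype.equivFinOfCardEq hcard with he
  clear_value e
  clear he hcard
  clear_value Q m dd a₀ r τ ρ
  refine ⟨fun ij => a₀ + Av n Q τ (e.symm ij.1) (e.symm ij.2)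
      + ρ * (if ij.1 = ij.2 then 1 else 0), ?_, ?_, ?_⟩
  · intro i
    show ∑ j : Fin m,
      (a₀ + Av n Q τ (e.symm i) (e.symm j) + ρ * (if i = j then 1 else 0)) = dd
    have h1 : ∑ j : Fin m, Av n Q τ (e.symm i) (e.symm j) = n * (Q * τ) := by
      rw [Equiv.sum_comp e.symm (Av n Q τ (e.symm i))]
      exact Av_row n Q τ hτn.le _
    have h2 : ∑ j : Fin m, (if i = j then 1 else 0) = 1 := by
      rw [Finset.sum_ite_eq]
      simp
    rw [Finset.sum_add_distrib, Finset.sum_add_distrib, h1, ← Finset.mul_sum, h2,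
      Finset.sum_const, Finset.card_univ, Fintype.card_fin, smul_eq_mul]
    rw [← hd]; ring
  · intro j
    show ∑ i : Fin m,
      (a₀ + Av n Q τ (e.symm i) (e.symm j) + ρ * (if i = j then 1 else 0)) = dd
    have h1 : ∑ i : Fin m, Av n Q τ (e.symm i) (e.symm j) = n * (Q * τ) := by
      rw [Equiv.sum_comp e.symm (fun v => Av n Q τ v (e.symm j))]
      exact Av_col n Q τ hτn.le _
    have h2 : ∑ i : Fin m, (if i = j then 1 else 0) = 1 := by
      rw [Finset.sum_ite_eq']
      simp
    rw [Finset.sum_add_distrib, Finset.sum_add_distrib, h1, ← Finset.mul_sum, h2,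
      Finset.sum_const, Finset.card_univ, Fintype.card_fin, smul_eq_mul]
    rw [← hd]; ring
  · intro SA SB
    have hQc : (Q:ℚ) = (q:ℚ)^2 := by rw [hQdef]; push_cast; ring
    have hmnQ : (m:ℚ) = (n:ℚ)*(n:ℚ)*(Q:ℚ):= by rw [hmq, hQc]; ring
    have hm_ne : (m:ℚ) ≠ 0 := ne_of_gt hm0'
    have hn_ne : (n:ℚ) ≠ 0 := ne_of_gt hn0
    have hτle : (τ:ℚ) ≤ (n:ℚ) := by exact_mod_cast hτn.le
    have hsm : (SA.card:ℚ) ≤ (m:ℚ) := by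
      exact_mod_cast (show SA.card ≤ m by simpa using SA.card_le_univ)
    have htm : (SB.card:ℚ) ≤ (m:ℚ) := by
      exact_mod_cast (show SB.card ≤ m by simpa using SB.card_le_univ)
    have hIm : (((SA ∩ SB).card : ℕ):ℚ) ≤ (m:ℚ) := by
      exact_mod_cast (show (SA ∩ SB).card ≤ m by simpa using (SA ∩ SB).card_le_univ)
    have hεp1 : 1 ≤ ε*p*(q:ℚ)^2 := arith1 ε p (q:ℚ) hε0 hp0 hqQ hεge hpge
    have h1n : 1 ≤ (ε*p)^2*(n:ℚ) := by
      have := arith2 (ε*p) (n:ℚ) (q:ℚ) (mul_pos hε0 hp0) hq1 (by linarith [hεp1]) hnq4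
      linarith [this]
    have hdcast : ((a₀ * m + (τ * (n*Q) + ρ) : ℕ) : ℚ) = (1+ε)*p*m := by rw [hd]; exact hdq
    push_cast at hdcast
    have hcm : (τ:ℚ)/(n:ℚ)*(m:ℚ) = (τ:ℚ)*((n:ℚ)*(Q:ℚ)) := by
      rw [hmnQ]; field_simp
    have hident : (a₀:ℚ) + (τ:ℚ)/(n:ℚ) + (ρ:ℚ)/(m:ℚ) = (1+ε)*p := by
      have expand : ((a₀:ℚ) + (τ:ℚ)/(n:ℚ) + (ρ:ℚ)/(m:ℚ))*(m:ℚ)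
          = (a₀:ℚ)*(m:ℚ) + (τ:ℚ)/(n:ℚ)*(m:ℚ) + (ρ:ℚ) := by field_simp
      have h6 : ((a₀:ℚ) + (τ:ℚ)/(n:ℚ) + (ρ:ℚ)/(m:ℚ))*(m:ℚ) = ((1+ε)*p)*(m:ℚ) := by
        rw [expand, hcm]; linear_combination hdcast
      exact mul_right_cancel₀ hm_ne h6
    -- sum expansion
    have hsplit : ∀ i j : Fin m, ((a₀ + Av n Q τ (e.symm i) (e.symm j)
        + ρ * (if i = j then 1 else 0) : ℕ) : ℚ)
        = (a₀:ℚ) + (Av n Q τ (e.symm i) (e.symm j) : ℚ)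
          + (ρ:ℚ) * (if i = j then 1 else 0) := by
      intro i j; push_cast; ring
    have inner_split : ∀ i : Fin m, ∑ j ∈ SB, ((a₀:ℚ) + (Av n Q τ (e.symm i) (e.symm j) : ℚ)
        + (ρ:ℚ) * (if i = j then 1 else 0))
        = (∑ _j ∈ SB, (a₀:ℚ)) + (∑ j ∈ SB, (Av n Q τ (e.symm i) (e.symm j) : ℚ))
          + ∑ j ∈ SB, (ρ:ℚ) * (if i = j then 1 else 0) := by
      intro i
      rw [Finset.sum_add_distrib, Finset.sum_add_distrib]
    have T1 : ∑ _i ∈ SA, ∑ _j ∈ SB, (a₀:ℚ) = (a₀:ℚ) * ((SA.card:ℚ) * (SB.card:ℚ)) := by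
      rw [Finset.sum_const, Finset.sum_const, nsmul_eq_mul, nsmul_eq_mul]; ring
    have T2 : ∑ i ∈ SA, ∑ j ∈ SB, (Av n Q τ (e.symm i) (e.symm j) : ℚ)
        = ∑ v ∈ SA.map e.symm.toEmbedding, ∑ w ∈ SB.map e.symm.toEmbedding,
            (Av n Q τ v w : ℚ) := by
      simp only [Finset.sum_map, Equiv.coe_toEmbedding]
    have T3 : ∑ i ∈ SA, ∑ j ∈ SB, (ρ:ℚ) * (if i = j then 1 else 0)
        = (ρ:ℚ) * (((SA ∩ SB).card : ℕ):ℚ) := by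
      have h1 : ∀ i : Fin m, ∑ j ∈ SB, (ρ:ℚ) * (if i = j then 1 else 0)
          = (ρ:ℚ) * (if i ∈ SB then 1 else 0) := by
        intro i
        rw [← Finset.mul_sum, Finset.sum_ite_eq]
      rw [Finset.sum_congr rfl fun i _ => h1 i, ← Finset.mul_sum, Finset.sum_boole,
        Finset.filter_mem_eq_inter]
    have hEAX : ∑ v ∈ SA.map e.symm.toEmbedding, ∑ w ∈ SB.map e.symm.toEmbedding,
          (Av n Q τ v w : ℚ)
        = (∑ v ∈ SA.map e.symm.toEmbedding, ∑ w ∈ SB.map e.symm.toEmbedding,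
            ((Av n Q τ v w : ℚ) - (τ:ℚ) / (n:ℚ)))
          + (τ:ℚ)/(n:ℚ) * ((SA.card:ℚ) * (SB.card:ℚ)) := by
      rw [Finset.sum_congr rfl fun v _ => Finset.sum_sub_distrib _ _, Finset.sum_sub_distrib,
        Finset.sum_const, Finset.sum_const, Finset.card_map, Finset.card_map,
        nsmul_eq_mul, nsmul_eq_mul]
      ring
    set X : ℚ := ∑ v ∈ SA.map e.symm.toEmbedding, ∑ w ∈ SB.map e.symm.toEmbedding,
        ((Av n Q τ v w : ℚ) - (τ:ℚ) / (n:ℚ)) with hXdef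
    have Etot : (∑ i ∈ SA, ∑ j ∈ SB, ((a₀ + Av n Q τ (e.symm i) (e.symm j)
        + ρ * (if i = j then 1 else 0) : ℕ) : ℚ))
        = (a₀:ℚ) * ((SA.card:ℚ) * (SB.card:ℚ))
          + (X + (τ:ℚ)/(n:ℚ) * ((SA.card:ℚ) * (SB.card:ℚ)))
          + (ρ:ℚ) * (((SA ∩ SB).card : ℕ):ℚ) := by
      calc (∑ i ∈ SA, ∑ j ∈ SB, ((a₀ + Av n Q τ (e.symm i) (e.symm j)
            + ρ * (if i = j then 1 else 0) : ℕ) : ℚ))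
          = ∑ i ∈ SA, ∑ j ∈ SB, ((a₀:ℚ) + (Av n Q τ (e.symm i) (e.symm j) : ℚ)
              + (ρ:ℚ) * (if i = j then 1 else 0)) :=
            Finset.sum_congr rfl fun i _ => Finset.sum_congr rfl fun j _ => hsplit i j
        _ = (∑ _i ∈ SA, ∑ _j ∈ SB, (a₀:ℚ))
            + (∑ i ∈ SA, ∑ j ∈ SB, (Av n Q τ (e.symm i) (e.symm j) : ℚ))
            + ∑ i ∈ SA, ∑ j ∈ SB, (ρ:ℚ) * (if i = j then 1 else 0) := by
            rw [Finset.sum_congr rfl fun i _ => inner_split i, Finset.sum_add_distrib,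
              Finset.sum_add_distrib]
        _ = (a₀:ℚ) * ((SA.card:ℚ) * (SB.card:ℚ))
            + (X + (τ:ℚ)/(n:ℚ) * ((SA.card:ℚ) * (SB.card:ℚ)))
            + (ρ:ℚ) * (((SA ∩ SB).card : ℕ):ℚ) := by
            rw [T1, T2, T3, hEAX]
    -- discrepancy bound
    have hX2 := Av_disc n Q τ hτn.le (SA.map e.symm.toEmbedding) (SB.map e.symm.toEmbedding)
    rw [Finset.card_map, Finset.card_map] at hX2
    have hb1 : (SA.card:ℚ)*(SB.card:ℚ) ≤ (m:ℚ)^2 :=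
      arith3 _ _ _ (by positivity) (by positivity) hsm htm
    have hc1 : (SA.card:ℚ)*(SB.card:ℚ)*((Q:ℚ)^2*(n:ℚ)^2*(τ:ℚ)) ≤ (ε*p*(m:ℚ)^2)^2 := by
      have hb2 : (Q:ℚ)^2*(n:ℚ)^2*(τ:ℚ) ≤ (q:ℚ)^4*(n:ℚ)^3 := by
        rw [hQc]; exact arith4 _ _ _ hqQ.le hn0.le hτle
      calc (SA.card:ℚ)*(SB.card:ℚ)*((Q:ℚ)^2*(n:ℚ)^2*(τ:ℚ))
          ≤ (m:ℚ)^2 * ((q:ℚ)^4*(n:ℚ)^3) := by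
            apply mul_le_mul hb1 hb2 (by positivity) (by positivity)
        _ ≤ (ε*p*(m:ℚ)^2)^2 := by
            have hexp : (ε*p*(m:ℚ)^2)^2 = ((ε*p)^2*(n:ℚ)) * ((m:ℚ)^2*((q:ℚ)^4*(n:ℚ)^3)) := by
              rw [hmq]; ring
            rw [hexp]
            exact le_mul_of_one_le_left (by positivity) h1n
    have hXsq : X^2 ≤ (ε*p*(m:ℚ)^2)^2 := le_trans hX2 hc1
    have habs1 : |X| ≤ ε*p*(m:ℚ)^2 := arith5 _ _ hXsq (by positivity)
    -- rho term
    have hstm : (SA.card:ℚ)*(SB.card:ℚ)/(m:ℚ) ≤ (m:ℚ) := by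
      rw [div_le_iff₀ hm0']
      calc (SA.card:ℚ)*(SB.card:ℚ) ≤ (m:ℚ)^2 := hb1
        _ = (m:ℚ)*(m:ℚ) := sq (m:ℚ) ▸ by ring
    have habs0 : |(((SA ∩ SB).card : ℕ):ℚ) - (SA.card:ℚ)*(SB.card:ℚ)/(m:ℚ)| ≤ (m:ℚ) := by
      have hI0 : (0:ℚ) ≤ (((SA ∩ SB).card : ℕ):ℚ) := by positivity
      have hst0 : (0:ℚ) ≤ (SA.card:ℚ)*(SB.card:ℚ)/(m:ℚ) := by positivity
      rw [abs_le]
      constructor <;> linarith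
    have hρle : (ρ:ℚ) ≤ (n:ℚ)*(q:ℚ)^2 := by
      rw [← hQc]
      exact_mod_cast hρn.le
    have hq2n : (q:ℚ)^2 ≤ (n:ℚ) := arith6 _ _ hq1 hnq4
    have h3 : (n:ℚ)^2 ≤ ε*p*(m:ℚ) := by
      rw [hmq]
      exact arith7 (ε*p) (q:ℚ) (n:ℚ) hn0.le hεp1
    have hρm : (ρ:ℚ)*(m:ℚ) ≤ ε*p*(m:ℚ)^2 := by
      have h2 : (ρ:ℚ) ≤ (n:ℚ)^2 := arith8 _ _ _ hqQ.le hn0.le hρle hq2n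
      calc (ρ:ℚ)*(m:ℚ) ≤ (ε*p*(m:ℚ))*(m:ℚ) :=
            mul_le_mul_of_nonneg_right (h2.trans h3) hm0'.le
        _ = ε*p*(m:ℚ)^2 := by ring
    have habs3 : |(ρ:ℚ)*((((SA ∩ SB).card : ℕ):ℚ) - (SA.card:ℚ)*(SB.card:ℚ)/(m:ℚ))|
        ≤ ε*p*(m:ℚ)^2 := by
      rw [abs_mul, abs_of_nonneg (by positivity : (0:ℚ) ≤ (ρ:ℚ))]
      calc (ρ:ℚ) * |(((SA ∩ SB).card : ℕ):ℚ) - (SA.card:ℚ)*(SB.card:ℚ)/(m:ℚ)|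
          ≤ (ρ:ℚ) * (m:ℚ) := mul_le_mul_of_nonneg_left habs0 (by positivity)
        _ ≤ ε*p*(m:ℚ)^2 := hρm
    have habs2 : |ε*p*((SA.card:ℚ)*(SB.card:ℚ))| ≤ ε*p*(m:ℚ)^2 := by
      rw [abs_of_nonneg (by positivity)]
      exact mul_le_mul_of_nonneg_left hb1 (by positivity)
    -- final assembly
    have key : |(∑ i ∈ SA, ∑ j ∈ SB, ((a₀ + Av n Q τ (e.symm i) (e.symm j)
        + ρ * (if i = j then 1 else 0) : ℕ) : ℚ)) - p * SA.card * SB.card| ≤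
        3 * ε * (m : ℚ) ^ 2 * p := by
      rw [Etot]
      have hre : (a₀:ℚ) * ((SA.card:ℚ) * (SB.card:ℚ))
          + (X + (τ:ℚ)/(n:ℚ) * ((SA.card:ℚ) * (SB.card:ℚ)))
          + (ρ:ℚ) * (((SA ∩ SB).card : ℕ):ℚ) - p * SA.card * SB.card
          = ε*p*((SA.card:ℚ)*(SB.card:ℚ)) + X
            + (ρ:ℚ)*((((SA ∩ SB).card : ℕ):ℚ) - (SA.card:ℚ)*(SB.card:ℚ)/(m:ℚ)) := by
        linear_combination ((SA.card:ℚ)*(SB.card:ℚ)) * hident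
      rw [hre]
      calc |ε*p*((SA.card:ℚ)*(SB.card:ℚ)) + X
            + (ρ:ℚ)*((((SA ∩ SB).card : ℕ):ℚ) - (SA.card:ℚ)*(SB.card:ℚ)/(m:ℚ))|
          ≤ |ε*p*((SA.card:ℚ)*(SB.card:ℚ))| + |X|
            + |(ρ:ℚ)*((((SA ∩ SB).card : ℕ):ℚ) - (SA.card:ℚ)*(SB.card:ℚ)/(m:ℚ))| :=
            abs_add_three _ _ _
        _ ≤ 3 * ε * (m : ℚ) ^ 2 * p := by linarith [habs1, habs2, habs3]
    exact key
end

section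
/- Let G=(V,E) be a finite graph with positive edge weights W and n = |V|, and let σ be an ordering of V that minimizes SVC_G over all orderings. For t ∈ {1,…,n}, let d_t denote the total weight of edges newly covered at step t, i.e., d_t = u_{t−1} − u_t where u_t is the total weight of edges with both endpoints outside σ({1,…,t}). Then the sequence (d_t) is non-increasing: d_{t+1} ≤ d_t for all 1 ≤ t ≤ n−1. -/
/-- `u_t`: the total weight of edges having both endpoints outside the first `t` visited
vertices (equivalently, edges with cover time `> t`). -/
noncomputable def uncoveredWeight {V ι : Type*} [Fintype V] [Fintype ι]
    (a b : ι → V) (W : ι → ℝ) (σ : Fin (Fintype.card V) ≃ V) (t : ℕ) : ℝ :=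
  ∑ e ∈ Finset.univ.filter (fun e : ι => t < coverTime σ (a e) (b e)), W e

/-! Swapping the vertices `x, y` at positions `t, t + 1` of `σ` changes only `u_t`, and
`SVC = ∑ₛ u_s`, so optimality of `σ` gives `u_t(σ) ≤ u_t(σ')` for the swapped ordering `σ'`.
With `S` the first `t - 1` vertices, an edge missing both `S ∪ {x}` and `S ∪ {y}` misses
`S ∪ {x, y}`, and one missing either misses `S`; hence `u_t(σ') + u_t(σ) ≤ u_{t-1} + u_{t+1}`,
which together with the first inequality is `d_{t+1} ≤ d_t`. -/

section SwapAdjacent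

variable {n : ℕ} {i j : Fin n}

lemma lt_swap_add_one_iff_of_ne (hij : (j : ℕ) = i + 1) (p : Fin n) {s : ℕ} (hs : s ≠ j) :
    s < (Equiv.swap i j p : ℕ) + 1 ↔ s < (p : ℕ) + 1 := by
  grind

lemma add_one_lt_of_lt_swap_add_one (hij : (j : ℕ) = i + 1) (p : Fin n)
    (hswap : (j : ℕ) < (Equiv.swap i j p : ℕ) + 1) (hp : (j : ℕ) < (p : ℕ) + 1) :
    (j : ℕ) + 1 < (p : ℕ) + 1 := by
  grind

end SwapAdjacent

section Ordering

variable {V : Type*} [Fintype V]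

lemma coverTime_le_card (σ : Fin (Fintype.card V) ≃ V) (u w : V) :
    coverTime σ u w ≤ Fintype.card V :=
  (min_le_left _ _).trans (σ.symm u).isLt

lemma vertexPos_swap_trans (σ : Fin (Fintype.card V) ≃ V) (i j : Fin (Fintype.card V)) (v : V) :
    vertexPos ((Equiv.swap i j).trans σ) v = (Equiv.swap i j (σ.symm v) : ℕ) + 1 := by
  simp [vertexPos]

variable (σ : Fin (Fintype.card V) ≃ V) {i j : Fin (Fintype.card V)}

lemma lt_coverTime_swap_trans_iff_of_ne (hij : (j : ℕ) = i + 1) (u w : V) {s : ℕ}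
    (hs : s ≠ j) :
    s < coverTime ((Equiv.swap i j).trans σ) u w ↔ s < coverTime σ u w := by
  simp only [coverTime, Nat.lt_min, vertexPos_swap_trans]
  simp only [vertexPos, lt_swap_add_one_iff_of_ne hij _ hs]

lemma add_one_lt_coverTime_of_lt_coverTime_swap_trans (hij : (j : ℕ) = i + 1) (u w : V)
    (hswap : (j : ℕ) < coverTime ((Equiv.swap i j).trans σ) u w)
    (hσ : (j : ℕ) < coverTime σ u w) :
    (j : ℕ) + 1 < coverTime σ u w := by
  simp only [coverTime, Nat.lt_min, vertexPos_swap_trans] at hswap hσ ⊢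
  simp only [vertexPos] at hσ ⊢
  exact ⟨add_one_lt_of_lt_swap_add_one hij _ hswap.1 hσ.1,
    add_one_lt_of_lt_swap_add_one hij _ hswap.2 hσ.2⟩

end Ordering

lemma Finset.sum_add_sum_le_of_union_subset_of_inter_subset {ι M : Type*} [DecidableEq ι]
    [AddCommMonoid M] [PartialOrder M] [IsOrderedAddMonoid M] {s t u v : Finset ι} {f : ι → M}
    (hf : ∀ x, 0 ≤ f x) (hu : s ∪ t ⊆ u) (hv : s ∩ t ⊆ v) :
    ∑ x ∈ s, f x + ∑ x ∈ t, f x ≤ ∑ x ∈ u, f x + ∑ x ∈ v, f x := by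
  rw [← Finset.sum_union_inter]
  gcongr <;> exact fun x _ _ ↦ hf x

section Weights

variable {V ι : Type*} [Fintype V] [Fintype ι] (a b : ι → V) (W : ι → ℝ)
  (σ : Fin (Fintype.card V) ≃ V)

/-- Layer-cake formula: an edge of cover time `c` is counted in `u_0, …, u_{c-1}`. -/
lemma SVC_eq_sum_uncoveredWeight :
    SVC a b W σ = ∑ s ∈ Finset.range (Fintype.card V), uncoveredWeight a b W σ s := by
  simp only [SVC, uncoveredWeight, Finset.sum_filter]
  rw [Finset.sum_comm]
  refine Finset.sum_congr rfl fun e _ ↦ ?_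
  have hrange : (Finset.range (Fintype.card V)).filter (· < coverTime σ (a e) (b e)) =
      Finset.range (coverTime σ (a e) (b e)) := by
    have := coverTime_le_card σ (a e) (b e)
    ext s
    simp only [Finset.mem_filter, Finset.mem_range]
    omega
  rw [← Finset.sum_filter, hrange, Finset.sum_const, Finset.card_range, nsmul_eq_mul, mul_comm]

lemma SVC_sub_SVC_eq_of_uncoveredWeight_eq_of_ne (σ' : Fin (Fintype.card V) ≃ V) {t : ℕ}
    (ht : t < Fintype.card V)
    (h : ∀ s ≠ t, uncoveredWeight a b W σ' s = uncoveredWeight a b W σ s) :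
    SVC a b W σ' - SVC a b W σ = uncoveredWeight a b W σ' t - uncoveredWeight a b W σ t := by
  rw [SVC_eq_sum_uncoveredWeight, SVC_eq_sum_uncoveredWeight, ← Finset.sum_sub_distrib]
  refine Finset.sum_eq_single_of_mem t (Finset.mem_range.2 ht) fun s _ hs ↦ ?_
  rw [h s hs, sub_self]

variable {i j : Fin (Fintype.card V)} (hij : (j : ℕ) = i + 1)
include hij

lemma uncoveredWeight_swap_trans_of_ne {s : ℕ} (hs : s ≠ j) :
    uncoveredWeight a b W ((Equiv.swap i j).trans σ) s = uncoveredWeight a b W σ s := by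
  simp only [uncoveredWeight, lt_coverTime_swap_trans_iff_of_ne σ hij _ _ hs]

lemma uncoveredWeight_swap_trans_add_le (hW : ∀ e, 0 ≤ W e) :
    uncoveredWeight a b W ((Equiv.swap i j).trans σ) j + uncoveredWeight a b W σ j ≤
      uncoveredWeight a b W σ i + uncoveredWeight a b W σ (j + 1) := by
  classical
  refine Finset.sum_add_sum_le_of_union_subset_of_inter_subset hW ?_ ?_ <;> intro e he <;>
    simp only [Finset.mem_union, Finset.mem_inter, Finset.mem_filter, Finset.mem_univ,
      true_and] at he ⊢
  · have hi : (i : ℕ) ≠ j := by omega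
    rcases he with he | he
    · exact (lt_coverTime_swap_trans_iff_of_ne σ hij _ _ hi).1 (by omega)
    · omega
  · exact add_one_lt_coverTime_of_lt_coverTime_swap_trans σ hij _ _ he.1 he.2

end Weights

/-- Let `σ` be an ordering minimizing `SVC_G` for a finite graph `G` with
positive edge weights, and let `d_t = u_{t−1} − u_t` be the weight of edges newly covered at
step `t`.  Then `(d_t)` is non-increasing: `d_{t+1} ≤ d_t` for `1 ≤ t ≤ n−1`. -/
theorem newly_covered_weight_nonincreasing {V ι : Type*} [Fintype V] [Fintype ι]
    (a b : ι → V) (W : ι → ℝ) (hW : ∀ e, 0 < W e)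
    (σ : Fin (Fintype.card V) ≃ V)
    (hopt : ∀ σ' : Fin (Fintype.card V) ≃ V, SVC a b W σ ≤ SVC a b W σ')
    (t : ℕ) (ht1 : 1 ≤ t) (ht2 : t + 1 ≤ Fintype.card V) :
    uncoveredWeight a b W σ t - uncoveredWeight a b W σ (t + 1) ≤
      uncoveredWeight a b W σ (t - 1) - uncoveredWeight a b W σ t := by
  let i : Fin (Fintype.card V) := ⟨t - 1, by omega⟩
  let j : Fin (Fintype.card V) := ⟨t, by omega⟩
  have hij : (j : ℕ) = i + 1 := by simp only [i, j]; omega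
  let σ' := (Equiv.swap i j).trans σ
  have hsvc := SVC_sub_SVC_eq_of_uncoveredWeight_eq_of_ne a b W σ σ' j.isLt
    fun s hs ↦ uncoveredWeight_swap_trans_of_ne a b W σ hij hs
  have hswap := uncoveredWeight_swap_trans_add_le a b W σ hij fun e ↦ (hW e).le
  linarith [hopt σ']
end

section
/- Let G=(V,E) be a D-regular finite simple graph with n = |V| vertices and m = nD/2 edges. Then for every ordering σ of V, SVC_G(σ) ≥ n·m/4 (all edge weights equal to 1). In particular MSVC(G) ≥ n·m/4, i.e., the optimal solution covers an edge on average at time at least n/4. -/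
/-!
After `t` steps of the ordering at most `t` vertices, hence at most `t * D` edges, are covered.
Comparing every edge `e` with the edges covered no later than `e` then gives
`D * SVC ≥ #{(e, e') | c e' ≤ c e} ≥ m ^ 2 / 2`, since of any two edges one is covered no later
than the other. With `2 * m = n * D` this is `SVC ≥ n * m / 4`.
-/

open Finset

/-- The cover time of an edge `e : Sym2 V`: the earliest position of one of its endpoints. -/
def edgeCoverTime {V : Type*} [Fintype V] (σ : Fin (Fintype.card V) ≃ V) : Sym2 V → ℕ :=
  Sym2.lift ⟨fun u w => min (vertexPos σ u) (vertexPos σ w), fun _ _ => min_comm _ _⟩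

namespace Finset

variable {α : Type*} (s : Finset α)

theorem sq_card_le_two_mul_card_filter_le {β : Type*} [LinearOrder β] (f : α → β) :
    #s ^ 2 ≤ 2 * #{p ∈ s ×ˢ s | f p.1 ≤ f p.2} := by
  have h_swap : #{p ∈ s ×ˢ s | f p.2 ≤ f p.1} = #{p ∈ s ×ˢ s | f p.1 ≤ f p.2} :=
    card_nbij' Prod.swap Prod.swap (fun p hp => by simp_all) (fun p hp => by simp_all)
      (fun p _ => rfl) (fun p _ => rfl)
  have h_not : #{p ∈ s ×ˢ s | ¬f p.1 ≤ f p.2} ≤ #{p ∈ s ×ˢ s | f p.2 ≤ f p.1} :=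
    card_le_card (monotone_filter_right _ fun p _ h => (not_le.mp h).le)
  calc #s ^ 2 = #{p ∈ s ×ˢ s | f p.1 ≤ f p.2} + #{p ∈ s ×ˢ s | ¬f p.1 ≤ f p.2} := by
        rw [card_filter_add_card_filter_not, card_product, sq]
    _ ≤ 2 * #{p ∈ s ×ˢ s | f p.1 ≤ f p.2} := by omega

theorem sq_card_le_two_mul_sum_of_card_filter_le {f : α → ℕ} {D : ℕ}
    (h : ∀ t, #{x ∈ s | f x ≤ t} ≤ t * D) :
    #s ^ 2 ≤ 2 * (D * ∑ x ∈ s, f x) := by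
  have h_pairs : #{p ∈ s ×ˢ s | f p.1 ≤ f p.2} = ∑ y ∈ s, #{x ∈ s | f x ≤ f y} := by
    rw [card_filter, sum_product_right]
    simp only [card_filter]
  calc #s ^ 2 ≤ 2 * #{p ∈ s ×ˢ s | f p.1 ≤ f p.2} := sq_card_le_two_mul_card_filter_le s f
    _ ≤ 2 * ∑ x ∈ s, f x * D := by
        rw [h_pairs]
        gcongr with y
        exact h (f y)
    _ = 2 * (D * ∑ x ∈ s, f x) := by rw [← sum_mul, mul_comm D]

end Finset

section CoverTime

variable {V : Type*} [Fintype V] (σ : Fin (Fintype.card V) ≃ V)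

theorem card_filter_vertexPos_le (t : ℕ) : #{v | vertexPos σ v ≤ t} ≤ t := by
  calc #{v | vertexPos σ v ≤ t} ≤ #(Icc 1 t) :=
        card_le_card_of_injOn (vertexPos σ)
          (fun v hv => by simpa [vertexPos] using (mem_filter.mp hv).2)
          (fun v _ w _ h => σ.symm.injective (Fin.ext (by simpa [vertexPos] using h)))
    _ = t := by simp

theorem exists_mem_vertexPos_le_of_edgeCoverTime_le {e : Sym2 V} {t : ℕ}
    (h : edgeCoverTime σ e ≤ t) : ∃ v ∈ e, vertexPos σ v ≤ t := by
  induction e using Sym2.ind with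
  | _ u w =>
    rcases min_le_iff.mp h with hu | hw
    · exact ⟨u, Sym2.mem_mk_left u w, hu⟩
    · exact ⟨w, Sym2.mem_mk_right u w, hw⟩

theorem card_filter_edgeCoverTime_le {G : SimpleGraph V} [DecidableRel G.Adj]
    {D : ℕ} (hreg : G.IsRegularOfDegree D) (t : ℕ) :
    #{e ∈ G.edgeFinset | edgeCoverTime σ e ≤ t} ≤ t * D := by
  classical
  have h_sub : {e ∈ G.edgeFinset | edgeCoverTime σ e ≤ t} ⊆
      ({v | vertexPos σ v ≤ t} : Finset V).biUnion fun v => G.incidenceFinset v := by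
    intro e he
    obtain ⟨he, hle⟩ := mem_filter.mp he
    obtain ⟨v, hv, hvt⟩ := exists_mem_vertexPos_le_of_edgeCoverTime_le σ hle
    exact mem_biUnion.mpr ⟨v, by simpa using hvt,
      (G.mem_incidenceFinset v e).mpr ⟨G.mem_edgeFinset.mp he, hv⟩⟩
  calc #{e ∈ G.edgeFinset | edgeCoverTime σ e ≤ t}
      ≤ ∑ v ∈ ({v | vertexPos σ v ≤ t} : Finset V), #(G.incidenceFinset v) :=
        (card_le_card h_sub).trans card_biUnion_le
    _ = #{v | vertexPos σ v ≤ t} * D := by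
        simp only [G.card_incidenceFinset_eq_degree, hreg.degree_eq, sum_const, smul_eq_mul]
    _ ≤ t * D := Nat.mul_le_mul_right D (card_filter_vertexPos_le σ t)

end CoverTime

theorem regular_svc_lower_bound_general {V : Type*} [Fintype V]
    (G : SimpleGraph V) [DecidableRel G.Adj] (D : ℕ) (hreg : G.IsRegularOfDegree D)
    (σ : Fin (Fintype.card V) ≃ V) :
    (Fintype.card V : ℝ) * (G.edgeFinset.card : ℝ) / 4 ≤
      ∑ e ∈ G.edgeFinset, (edgeCoverTime σ e : ℝ) := by
  have h_handshake : 2 * #G.edgeFinset = Fintype.card V * D := by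
    simp [← G.sum_degrees_eq_twice_card_edges, hreg.degree_eq]
  have h_pairs := G.edgeFinset.sq_card_le_two_mul_sum_of_card_filter_le
    (card_filter_edgeCoverTime_le σ hreg)
  have h_bound : Fintype.card V * #G.edgeFinset ≤ 4 * ∑ e ∈ G.edgeFinset, edgeCoverTime σ e := by
    rcases Nat.eq_zero_or_pos D with rfl | hD
    · simp [show #G.edgeFinset = 0 by omega]
    · refine Nat.le_of_mul_le_mul_right ?_ hD
      calc Fintype.card V * #G.edgeFinset * D = 2 * #G.edgeFinset ^ 2 := by
            rw [mul_right_comm, ← h_handshake]; ring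
        _ ≤ 4 * (∑ e ∈ G.edgeFinset, edgeCoverTime σ e) * D := by linarith
  rw [div_le_iff₀ four_pos, mul_comm _ (4 : ℝ)]
  exact_mod_cast h_bound

/-- Let `G` be a `D`-regular graph on `n` vertices with `m` edges
(`m = nD/2`).  Then for every ordering `σ`, `SVC_G(σ) = Σ_e c_{σ,e} ≥ n·m/4`; in particular
`MSVC(G) ≥ n·m/4`. -/
theorem regular_svc_lower_bound {V : Type*} [Fintype V] [DecidableEq V]
    (G : SimpleGraph V) [DecidableRel G.Adj] (D : ℕ) (hreg : G.IsRegularOfDegree D)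
    (σ : Fin (Fintype.card V) ≃ V) :
    (Fintype.card V : ℝ) * (G.edgeFinset.card : ℝ) / 4 ≤
      ∑ e ∈ G.edgeFinset, (edgeCoverTime σ e : ℝ) :=
  regular_svc_lower_bound_general G D hreg σ
end

section
/- Let s, t ∈ ℕ with t even, and let G be the 2-regular simple graph consisting of the disjoint union of t/2 copies of the complete bipartite graph K_{2,2} and s copies of the triangle K_3, so that G has n = 2t + 3s vertices and n edges. Then there exists an ordering σ of the vertices of G such that SVC_G(σ) ≤ t² + 3st + (5/2)s² + n (all edge weights equal to 1). -/
/-! The ordering lists one side of every `K_{2,2}` (positions `0, …, t - 1`), then the first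
vertex of every triangle, then the second vertex of every triangle, then the rest. The edges of
the `c`-th copy of `K_{2,2}` are covered by time `2c + 2`; two edges of the `c`-th triangle are
covered at time `t + c + 1` and the third at time `t + s + c + 1`. Summing these linear bounds
gives `t² + 2t + 3st + (5/2)s² + (3/2)s`. -/

attribute [local instance] Classical.propDecidable

/-- The disjoint union of `k` copies of the complete bipartite graph `K_{2,2}` (on vertex
classes `{0,1}` and `{2,3}` of `Fin 4`) and `s` copies of the triangle `K₃`. -/
def clusterGraph (k s : ℕ) : SimpleGraph ((Fin k × Fin 4) ⊕ (Fin s × Fin 3)) :=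
  SimpleGraph.fromRel (fun x y =>
    match x, y with
    | Sum.inl (c, i), Sum.inl (c', i') => c = c' ∧ (i : ℕ) < 2 ∧ 2 ≤ (i' : ℕ)
    | Sum.inr (c, _), Sum.inr (c', _) => c = c'
    | _, _ => False)

section Ordering

variable {V : Type*} [Fintype V]

noncomputable def orderingOfInjective (p : V → Fin (Fintype.card V))
    (hp : Function.Injective p) : Fin (Fintype.card V) ≃ V :=
  (Equiv.ofBijective p
    ((Fintype.bijective_iff_injective_and_card p).2 ⟨hp, (Fintype.card_fin _).symm⟩)).symm

theorem vertexPos_orderingOfInjective (p : V → Fin (Fintype.card V))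
    (hp : Function.Injective p) (v : V) :
    vertexPos (orderingOfInjective p hp) v = p v + 1 := by
  simp [vertexPos, orderingOfInjective]

theorem edgeCoverTime_mk (σ : Fin (Fintype.card V) ≃ V) (u w : V) :
    edgeCoverTime σ s(u, w) = min (vertexPos σ u) (vertexPos σ w) :=
  rfl

end Ordering

theorem SimpleGraph.sum_edgeFinset_le_of_edgeSet_subset_range {V ι : Type*} [Fintype ι]
    {G : SimpleGraph V} [Fintype G.edgeSet] (f : Sym2 V → ℕ) {g : ι → Sym2 V}
    (hg : G.edgeSet ⊆ Set.range g) :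
    ∑ e ∈ G.edgeFinset, f e ≤ ∑ i, f (g i) := by
  have hsub : G.edgeFinset ⊆ Finset.univ.image g := fun e he => by
    obtain ⟨i, rfl⟩ := hg (G.mem_edgeFinset.1 he)
    exact Finset.mem_image_of_mem g (Finset.mem_univ i)
  exact (Finset.sum_le_sum_of_subset hsub).trans
    (Finset.sum_image_le_of_nonneg fun _ _ => Nat.zero_le _)

/-- Doubled so that the Gauss sum needs no division in `ℕ`. -/
theorem two_mul_sum_fin_mul_add (n a b : ℕ) :
    2 * ∑ i : Fin n, (a * i + b) + a * n = a * n ^ 2 + 2 * b * n := by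
  rw [Fin.sum_univ_eq_sum_range (fun i => a * i + b)]
  induction n with
  | zero => simp
  | succ n ih => rw [Finset.sum_range_succ]; nlinarith [ih]

theorem Fin.exists_mk_add_one_eq_of_ne :
    ∀ j j' : Fin 3, j ≠ j' → ∃ i : Fin 3, s(i, i + 1) = s(j, j') := by
  decide

namespace clusterGraph

variable (k s : ℕ)

def position : (Fin k × Fin 4) ⊕ (Fin s × Fin 3) → ℕ
  | Sum.inl (c, i) => if (i : ℕ) < 2 then 2 * c + i else 2 * k + 2 * s + 2 * c + ((i : ℕ) - 2)
  | Sum.inr (c, j) =>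
      if (j : ℕ) = 0 then 2 * k + c
      else if (j : ℕ) = 1 then 2 * k + s + c else 4 * k + 2 * s + c

theorem position_lt_card (v : (Fin k × Fin 4) ⊕ (Fin s × Fin 3)) :
    position k s v < Fintype.card ((Fin k × Fin 4) ⊕ (Fin s × Fin 3)) := by
  simp only [Fintype.card_sum, Fintype.card_prod, Fintype.card_fin]
  rcases v with ⟨c, i⟩ | ⟨c, j⟩
  · have := c.isLt; have := i.isLt
    simp only [position]; split_ifs <;> omega
  · have := c.isLt; have := j.isLt
    simp only [position]; split_ifs <;> omega

theorem position_injective : Function.Injective (position k s) := by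
  rintro (⟨c, i⟩ | ⟨c, i⟩) (⟨c', i'⟩ | ⟨c', i'⟩) h <;>
    simp only [position] at h <;>
    have := c.isLt <;> have := c'.isLt <;> have := i.isLt <;> have := i'.isLt <;>
    split_ifs at h <;>
    simp only [Sum.inl.injEq, Sum.inr.injEq, reduceCtorEq, Prod.mk.injEq, Fin.ext_iff] <;>
    omega

def positionFin (v : (Fin k × Fin 4) ⊕ (Fin s × Fin 3)) :
    Fin (Fintype.card ((Fin k × Fin 4) ⊕ (Fin s × Fin 3))) :=
  ⟨position k s v, position_lt_card k s v⟩

theorem positionFin_injective : Function.Injective (positionFin k s) :=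
  fun _ _ h => position_injective k s (Fin.ext_iff.1 h)

noncomputable def ordering :
    Fin (Fintype.card ((Fin k × Fin 4) ⊕ (Fin s × Fin 3))) ≃ ((Fin k × Fin 4) ⊕ (Fin s × Fin 3)) :=
  orderingOfInjective (positionFin k s) (positionFin_injective k s)

theorem edgeCoverTime_ordering_mk (u w : (Fin k × Fin 4) ⊕ (Fin s × Fin 3)) :
    edgeCoverTime (ordering k s) s(u, w) = min (position k s u + 1) (position k s w + 1) := by
  simp only [edgeCoverTime_mk, ordering, vertexPos_orderingOfInjective, positionFin]

def edge : (Fin k × Fin 2 × Fin 2) ⊕ (Fin s × Fin 3) → Sym2 ((Fin k × Fin 4) ⊕ (Fin s × Fin 3))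
  | Sum.inl (c, a, b) => s(Sum.inl (c, Fin.castAdd 2 a), Sum.inl (c, Fin.natAdd 2 b))
  | Sum.inr (c, j) => s(Sum.inr (c, j), Sum.inr (c, j + 1))

theorem mk_inl_mem_range_edge (c : Fin k) {i i' : Fin 4} (hi : (i : ℕ) < 2) (hi' : 2 ≤ (i' : ℕ)) :
    s(Sum.inl (c, i), Sum.inl (c, i')) ∈ Set.range (edge k s) :=
  ⟨.inl (c, ⟨i, hi⟩, ⟨i' - 2, by omega⟩), by
    simp only [edge, Sym2.eq_iff, Sum.inl.injEq, Prod.mk.injEq, Fin.ext_iff, Fin.val_castAdd,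
      Fin.val_natAdd, true_and]
    omega⟩

theorem mk_inr_mem_range_edge (c : Fin s) {j j' : Fin 3} (hj : j ≠ j') :
    s(Sum.inr (c, j), Sum.inr (c, j')) ∈ Set.range (edge k s) := by
  obtain ⟨i, hi⟩ := Fin.exists_mk_add_one_eq_of_ne j j' hj
  exact ⟨.inr (c, i), by
    simpa [edge] using congrArg (Sym2.map fun j => (Sum.inr (c, j) : (Fin k × Fin 4) ⊕ _)) hi⟩

theorem edgeSet_subset_range_edge : (clusterGraph k s).edgeSet ⊆ Set.range (edge k s) := by
  intro e he
  induction e using Sym2.ind with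
  | _ x y =>
  rw [SimpleGraph.mem_edgeSet, clusterGraph, SimpleGraph.fromRel_adj] at he
  rcases x with ⟨c, i⟩ | ⟨c, j⟩ <;> rcases y with ⟨c', i'⟩ | ⟨c', j'⟩
  · obtain ⟨-, ⟨rfl, hi, hi'⟩ | ⟨rfl, hi, hi'⟩⟩ := he
    · exact mk_inl_mem_range_edge k s c hi hi'
    · exact Sym2.eq_swap ▸ mk_inl_mem_range_edge k s c' hi hi'
  · exact (he.2.elim id id).elim
  · exact (he.2.elim id id).elim
  · obtain ⟨hne, rfl | rfl⟩ := he <;>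
      exact mk_inr_mem_range_edge k s _ fun h => hne (h ▸ rfl)

theorem edgeCoverTime_edge_inl (c : Fin k) (a b : Fin 2) :
    edgeCoverTime (ordering k s) (edge k s (Sum.inl (c, a, b))) ≤ 2 * c + 2 := by
  have := a.isLt
  simp only [edge, edgeCoverTime_ordering_mk, position, Fin.val_castAdd, Fin.val_natAdd]
  split_ifs <;> omega

theorem sum_edgeCoverTime_edge_inr_le (c : Fin s) :
    ∑ j : Fin 3, edgeCoverTime (ordering k s) (edge k s (Sum.inr (c, j))) ≤
      3 * c + (6 * k + 3 + s) := by
  simp only [Fin.sum_univ_three, edge, Fin.reduceAdd, edgeCoverTime_ordering_mk, position,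
    Fin.val_zero, Fin.val_one, Fin.val_two]
  split_ifs <;> omega

theorem two_mul_sum_edgeCoverTime_ordering_le :
    2 * ∑ e ∈ (clusterGraph k s).edgeFinset, edgeCoverTime (ordering k s) e ≤
      8 * k ^ 2 + 8 * k + 12 * k * s + 5 * s ^ 2 + 3 * s := by
  have hsum := (clusterGraph k s).sum_edgeFinset_le_of_edgeSet_subset_range
    (edgeCoverTime (ordering k s)) (edgeSet_subset_range_edge k s)
  rw [Fintype.sum_sum_type] at hsum
  have hbip : ∑ x : Fin k × Fin 2 × Fin 2, edgeCoverTime (ordering k s) (edge k s (.inl x)) ≤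
      4 * ∑ c : Fin k, (2 * (c : ℕ) + 2) := by
    refine (Finset.sum_le_sum fun x _ => edgeCoverTime_edge_inl k s x.1 x.2.1 x.2.2).trans ?_
    simp [Fintype.sum_prod_type, Finset.mul_sum, mul_comm]
  have htri : ∑ x : Fin s × Fin 3, edgeCoverTime (ordering k s) (edge k s (.inr x)) ≤
      ∑ c : Fin s, (3 * (c : ℕ) + (6 * k + 3 + s)) := by
    rw [Fintype.sum_prod_type]
    exact Finset.sum_le_sum fun c _ => sum_edgeCoverTime_edge_inr_le k s c
  have := two_mul_sum_fin_mul_add k 2 2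
  have := two_mul_sum_fin_mul_add s 3 (6 * k + 3 + s)
  linarith

end clusterGraph

/-- Let `t` be even and let `G` be the `2`-regular graph consisting of `t/2`
disjoint copies of `K_{2,2}` and `s` disjoint copies of `K₃`, so that `G` has `n = 2t + 3s`
vertices and `n` edges.  Then some ordering `σ` satisfies
`SVC_G(σ) = Σ_e c_{σ,e} ≤ t² + 3st + (5/2)s² + n`. -/
theorem clusterGraph_svc_upper_bound (t s : ℕ) (ht : Even t) :
    ∃ σ : Fin (Fintype.card ((Fin (t / 2) × Fin 4) ⊕ (Fin s × Fin 3))) ≃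
        ((Fin (t / 2) × Fin 4) ⊕ (Fin s × Fin 3)),
      ∑ e ∈ (clusterGraph (t / 2) s).edgeFinset, (edgeCoverTime σ e : ℝ) ≤
        (t : ℝ) ^ 2 + 3 * (s : ℝ) * (t : ℝ) + 5 / 2 * (s : ℝ) ^ 2 +
          (2 * (t : ℝ) + 3 * (s : ℝ)) := by
  obtain ⟨k, rfl⟩ := ht
  rw [show (k + k) / 2 = k by omega]
  refine ⟨clusterGraph.ordering k s, ?_⟩
  have hbound : (2 * ∑ e ∈ (clusterGraph k s).edgeFinset,
      (edgeCoverTime (clusterGraph.ordering k s) e : ℝ)) ≤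
        8 * k ^ 2 + 8 * k + 12 * k * s + 5 * s ^ 2 + 3 * s := by
    exact_mod_cast clusterGraph.two_mul_sum_edgeCoverTime_ordering_le k s
  push_cast
  linarith
end

section
/- Let s, t ∈ ℕ with t and s even, and let G be the 2-regular simple graph consisting of the disjoint union of t/2 copies of the complete bipartite graph K_{2,2} and s copies of the triangle K_3, so that G has n = 2t + 3s vertices and n edges. Then for every subset S of vertices with |S| = n/2 = t + 3s/2, the number of edges of G with both endpoints outside S is at least s/2; equivalently, S is incident to at most n − s/2 edges. -/
attribute [local instance] Classical.propDecidable

namespace ClusterAux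

variable {k s : ℕ}

abbrev V (k s : ℕ) := (Fin k × Fin 4) ⊕ (Fin s × Fin 3)

def comp : V k s → Fin k ⊕ Fin s
  | Sum.inl (c, _) => Sum.inl c
  | Sum.inr (c, _) => Sum.inr c

noncomputable def compE (e : Sym2 (V k s)) : Fin k ⊕ Fin s := comp e.out.1

lemma adj_inl {c : Fin k} {i i' : Fin 4} (h : (i : ℕ) < 2) (h' : 2 ≤ (i' : ℕ)) :
    (clusterGraph k s).Adj (Sum.inl (c, i)) (Sum.inl (c, i')) := by
  rw [clusterGraph, SimpleGraph.fromRel_adj]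
  refine ⟨?_, Or.inl ⟨rfl, h, h'⟩⟩
  simp only [ne_eq, Sum.inl.injEq, Prod.mk.injEq, not_and]
  intro _ hii
  subst hii; omega

lemma adj_inr {c : Fin s} {i i' : Fin 3} (h : i ≠ i') :
    (clusterGraph k s).Adj (Sum.inr (c, i)) (Sum.inr (c, i')) := by
  rw [clusterGraph, SimpleGraph.fromRel_adj]
  exact ⟨by simp [h], Or.inl rfl⟩

lemma adj_comp {a b : V k s} (h : (clusterGraph k s).Adj a b) : comp a = comp b := by
  rw [clusterGraph, SimpleGraph.fromRel_adj] at h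
  rcases a with ⟨c, i⟩ | ⟨c, i⟩ <;> rcases b with ⟨c', i'⟩ | ⟨c', i'⟩
  · rcases h.2 with ⟨h1, -⟩ | ⟨h1, -⟩ <;> simp [comp, h1]
  · rcases h.2 with h1 | h1 <;> exact h1.elim
  · rcases h.2 with h1 | h1 <;> exact h1.elim
  · rcases h.2 with h1 | h1 <;> simp [comp, h1]

lemma compE_mk {a b : V k s} {x : Fin k ⊕ Fin s}
    (ha : comp a = x) (hb : comp b = x) : compE s(a, b) = x := by
  have := Sym2.out_fst_mem s(a, b)
  rw [Sym2.mem_iff] at this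
  rcases this with h | h <;> rw [compE, h] <;> assumption

lemma two_le_card {α : Type*} {A : Finset α} {x y : α} (hx : x ∈ A) (hy : y ∈ A)
    (hxy : x ≠ y) : 2 ≤ A.card :=
  Finset.one_lt_card.mpr ⟨x, hx, y, hy, hxy⟩

end ClusterAux

open ClusterAux in
set_option maxHeartbeats 1000000 in
/-- Let `t` and `s` be even and let `G` be the `2`-regular graph consisting
of `t/2` disjoint copies of `K_{2,2}` and `s` disjoint copies of `K₃`, with `n = 2t + 3s`
vertices and `n` edges.  Then every vertex subset `S` with `|S| = n/2 = t + 3s/2` leaves at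
least `s/2` edges with both endpoints outside `S`; equivalently, `S` is incident to at most
`n − s/2` edges. -/
theorem clusterGraph_half_cover_bound (t s : ℕ) (ht : Even t) (hs : Even s)
    (S : Finset ((Fin (t / 2) × Fin 4) ⊕ (Fin s × Fin 3)))
    (hS : S.card = t + 3 * s / 2) :
    s / 2 ≤
        ((clusterGraph (t / 2) s).edgeFinset.filter (fun e => ∀ v ∈ e, v ∉ S)).card ∧
      ((clusterGraph (t / 2) s).edgeFinset.filter (fun e => ∃ v ∈ e, v ∈ S)).card ≤
        2 * t + 3 * s - s / 2 := by
  classical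
  obtain ⟨m, hm⟩ := hs
  obtain ⟨j, hj⟩ := ht
  set G := clusterGraph (t / 2) s with hG
  set uncov := G.edgeFinset.filter (fun e => ∀ v ∈ e, v ∉ S) with huncov
  have mem_fiber : ∀ (c : Fin (t / 2) ⊕ Fin s) (a b : V (t / 2) s),
      G.Adj a b → a ∉ S → b ∉ S →
      comp a = c → s(a, b) ∈ uncov.filter (fun e => compE e = c) := by
    intro c a b hadj ha hb hc
    refine Finset.mem_filter.mpr ⟨Finset.mem_filter.mpr ⟨?_, ?_⟩, compE_mk hc ?_⟩
    · exact SimpleGraph.mem_edgeFinset.mpr hadj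
    · intro v hv; rcases Sym2.mem_iff.mp hv with h | h <;> subst h <;> assumption
    · rw [← adj_comp hadj]; exact hc
  have key : ∀ c : Fin (t / 2) ⊕ Fin s,
      2 ≤ (uncov.filter (fun e => compE e = c)).card +
        (S.filter (fun v => comp v = c)).card := by
    intro c
    rcases c with c | c
    · -- K_{2,2} component
      set w : Fin 4 → V (t / 2) s := fun i => Sum.inl (c, i) with hw
      have hmemS : ∀ i : Fin 4, w i ∈ S → w i ∈ S.filter (fun v => comp v = Sum.inl c) := by
        intro i hi; exact Finset.mem_filter.mpr ⟨hi, rfl⟩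
      have hedge : ∀ i i' : Fin 4, (i : ℕ) < 2 → 2 ≤ (i' : ℕ) → w i ∉ S → w i' ∉ S →
          s(w i, w i') ∈ uncov.filter (fun e => compE e = Sum.inl c) := by
        intro i i' h h' hi hi'
        exact mem_fiber _ _ _ (adj_inl h h') hi hi' rfl
      have hwne : ∀ i i' : Fin 4, i ≠ i' → w i ≠ w i' := by
        intro i i' h hcon
        simp only [hw, Sum.inl.injEq, Prod.mk.injEq] at hcon
        exact h hcon.2
      by_cases h0 : w 0 ∈ S
      · by_cases h1 : w 1 ∈ S
        · have := two_le_card (hmemS 0 h0) (hmemS 1 h1) (hwne 0 1 (by decide))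
          omega
        · by_cases h2 : w 2 ∈ S
          · have := two_le_card (hmemS 0 h0) (hmemS 2 h2) (hwne 0 2 (by decide))
            omega
          · have e1 := hedge 1 2 (by decide) (by decide) h1 h2
            have v1 := hmemS 0 h0
            have := Finset.card_pos.mpr ⟨_, e1⟩
            have := Finset.card_pos.mpr ⟨_, v1⟩
            omega
      · by_cases h1 : w 1 ∈ S
        · by_cases h2 : w 2 ∈ S
          · have := two_le_card (hmemS 1 h1) (hmemS 2 h2) (hwne 1 2 (by decide))
            omega
          · have e1 := hedge 0 2 (by decide) (by decide) h0 h2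
            have v1 := hmemS 1 h1
            have := Finset.card_pos.mpr ⟨_, e1⟩
            have := Finset.card_pos.mpr ⟨_, v1⟩
            omega
        · by_cases h2 : w 2 ∈ S
          · by_cases h3 : w 3 ∈ S
            · have := two_le_card (hmemS 2 h2) (hmemS 3 h3) (hwne 2 3 (by decide))
              omega
            · have e1 := hedge 0 3 (by decide) (by decide) h0 h3
              have v1 := hmemS 2 h2
              have := Finset.card_pos.mpr ⟨_, e1⟩
              have := Finset.card_pos.mpr ⟨_, v1⟩
              omega
          · have e1 := hedge 0 2 (by decide) (by decide) h0 h2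
            have e2 := hedge 1 2 (by decide) (by decide) h1 h2
            have hne : s(w 0, w 2) ≠ s(w 1, w 2) := by
              intro hcon
              rw [Sym2.eq_iff] at hcon
              rcases hcon with ⟨h, -⟩ | ⟨h, -⟩
              exacts [hwne 0 1 (by decide) h, hwne 0 2 (by decide) h]
            have := two_le_card e1 e2 hne
            omega
    · -- triangle component
      set v : Fin 3 → V (t / 2) s := fun i => Sum.inr (c, i) with hv
      have hmemS : ∀ i : Fin 3, v i ∈ S → v i ∈ S.filter (fun x => comp x = Sum.inr c) := by
        intro i hi; exact Finset.mem_filter.mpr ⟨hi, rfl⟩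
      have hvne : ∀ i i' : Fin 3, i ≠ i' → v i ≠ v i' := by
        intro i i' h hcon
        simp only [hv, Sum.inr.injEq, Prod.mk.injEq] at hcon
        exact h hcon.2
      have hedge : ∀ i i' : Fin 3, i ≠ i' → v i ∉ S → v i' ∉ S →
          s(v i, v i') ∈ uncov.filter (fun e => compE e = Sum.inr c) := by
        intro i i' h hi hi'
        exact mem_fiber _ _ _ (adj_inr h) hi hi' rfl
      by_cases h0 : v 0 ∈ S
      · by_cases h1 : v 1 ∈ S
        · have := two_le_card (hmemS 0 h0) (hmemS 1 h1) (hvne 0 1 (by decide))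
          omega
        · by_cases h2 : v 2 ∈ S
          · have := two_le_card (hmemS 0 h0) (hmemS 2 h2) (hvne 0 2 (by decide))
            omega
          · have e1 := hedge 1 2 (by decide) h1 h2
            have v1 := hmemS 0 h0
            have := Finset.card_pos.mpr ⟨_, e1⟩
            have := Finset.card_pos.mpr ⟨_, v1⟩
            omega
      · by_cases h1 : v 1 ∈ S
        · by_cases h2 : v 2 ∈ S
          · have := two_le_card (hmemS 1 h1) (hmemS 2 h2) (hvne 1 2 (by decide))
            omega
          · have e1 := hedge 0 2 (by decide) h0 h2
            have v1 := hmemS 1 h1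
            have := Finset.card_pos.mpr ⟨_, e1⟩
            have := Finset.card_pos.mpr ⟨_, v1⟩
            omega
        · have e1 := hedge 0 1 (by decide) h0 h1
          by_cases h2 : v 2 ∈ S
          · have v1 := hmemS 2 h2
            have := Finset.card_pos.mpr ⟨_, e1⟩
            have := Finset.card_pos.mpr ⟨_, v1⟩
            omega
          · have e2 := hedge 0 2 (by decide) h0 h2
            have hne : s(v 0, v 1) ≠ s(v 0, v 2) := by
              intro hcon
              rw [Sym2.eq_iff] at hcon
              rcases hcon with ⟨-, h⟩ | ⟨h, -⟩
              exacts [hvne 1 2 (by decide) h, hvne 0 2 (by decide) h]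
            have := two_le_card e1 e2 hne
            omega
  have hfib1 : uncov.card =
      ∑ c : Fin (t / 2) ⊕ Fin s, (uncov.filter (fun e => compE e = c)).card :=
    Finset.card_eq_sum_card_fiberwise (fun e _ => Finset.mem_univ _)
  have hfib2 : S.card = ∑ c : Fin (t / 2) ⊕ Fin s, (S.filter (fun x => comp x = c)).card :=
    Finset.card_eq_sum_card_fiberwise (fun x _ => Finset.mem_univ _)
  have hsum : 2 * (t / 2 + s) ≤ uncov.card + S.card := by
    rw [hfib1, hfib2, ← Finset.sum_add_distrib]
    calc 2 * (t / 2 + s) = ∑ _c : Fin (t / 2) ⊕ Fin s, 2 := by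
          simp [Finset.card_univ, mul_comm]
      _ ≤ _ := Finset.sum_le_sum (fun c _ => key c)
  have hlower : s / 2 ≤ uncov.card := by omega
  refine ⟨hlower, ?_⟩
  have htot : G.edgeFinset.card ≤ 4 * (t / 2) + 3 * s := by
    classical
    set E : (Fin (t / 2) × Fin 2 × Fin 2) ⊕ (Fin s × Fin 3) → Sym2 (V (t / 2) s) := fun x =>
      match x with
      | Sum.inl (c, i, i') => s(Sum.inl (c, ⟨i, by omega⟩), Sum.inl (c, ⟨i' + 2, by omega⟩))
      | Sum.inr (c, i) => s(Sum.inr (c, i), Sum.inr (c, ⟨((i : ℕ) + 1) % 3, by omega⟩)) with hE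
    have hsub : G.edgeFinset ⊆ Finset.univ.image E := by
      intro e he
      rw [SimpleGraph.mem_edgeFinset] at he
      induction e using Sym2.ind with
      | _ a b =>
        rw [SimpleGraph.mem_edgeSet, hG, clusterGraph, SimpleGraph.fromRel_adj] at he
        obtain ⟨hne, hr⟩ := he
        rcases a with ⟨c, i⟩ | ⟨c, i⟩ <;> rcases b with ⟨c', i'⟩ | ⟨c', i'⟩
        · rcases hr with ⟨hc, h1, h2⟩ | ⟨hc, h1, h2⟩
          · subst hc
            exact Finset.mem_image.mpr ⟨Sum.inl (c, ⟨(i : ℕ), h1⟩, ⟨(i' : ℕ) - 2, by omega⟩),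
              Finset.mem_univ _,
              (congrArg₂ Sym2.mk
                (congrArg Sum.inl (Prod.ext rfl (Fin.ext (show (i : ℕ) = (i : ℕ) from rfl))))
                (congrArg Sum.inl (Prod.ext rfl
                  (Fin.ext (show (i' : ℕ) - 2 + 2 = (i' : ℕ) by omega)))))⟩
          · subst hc
            rw [Sym2.eq_swap]
            exact Finset.mem_image.mpr ⟨Sum.inl (c', ⟨(i' : ℕ), h1⟩, ⟨(i : ℕ) - 2, by omega⟩),
              Finset.mem_univ _,
              (congrArg₂ Sym2.mk
                (congrArg Sum.inl (Prod.ext rfl (Fin.ext (show (i' : ℕ) = (i' : ℕ) from rfl))))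
                (congrArg Sum.inl (Prod.ext rfl
                  (Fin.ext (show (i : ℕ) - 2 + 2 = (i : ℕ) by omega)))))⟩
        · exact absurd hr (by simp)
        · exact absurd hr (by simp)
        · have hc : c = c' := by rcases hr with h | h <;> simp_all
          subst hc
          have hii : (i : ℕ) ≠ (i' : ℕ) := by
            intro h; exact hne (by rw [Fin.ext h])
          have hij : (i : ℕ) < 3 := i.isLt
          have hij' : (i' : ℕ) < 3 := i'.isLt
          by_cases hfwd : ((i : ℕ) + 1) % 3 = (i' : ℕ)
          · exact Finset.mem_image.mpr ⟨Sum.inr (c, i), Finset.mem_univ _,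
              (congrArg₂ Sym2.mk rfl
                (congrArg Sum.inr (Prod.ext rfl (Fin.ext hfwd))))⟩
          · have hbwd : ((i' : ℕ) + 1) % 3 = (i : ℕ) := by omega
            rw [Sym2.eq_swap]
            exact Finset.mem_image.mpr ⟨Sum.inr (c, i'), Finset.mem_univ _,
              (congrArg₂ Sym2.mk rfl
                (congrArg Sum.inr (Prod.ext rfl (Fin.ext hbwd))))⟩
    calc G.edgeFinset.card ≤ (Finset.univ.image E).card := Finset.card_le_card hsub
      _ ≤ (Finset.univ : Finset ((Fin (t / 2) × Fin 2 × Fin 2) ⊕ (Fin s × Fin 3))).card :=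
          Finset.card_image_le
      _ = 4 * (t / 2) + 3 * s := by simp [Finset.card_univ]; ring
  have hpart : (G.edgeFinset.filter (fun e => ∃ v ∈ e, v ∈ S)).card + uncov.card
      = G.edgeFinset.card := by
    rw [huncov]
    have heq : (G.edgeFinset.filter (fun e => ∀ v ∈ e, v ∉ S))
        = G.edgeFinset.filter (fun e => ¬ ∃ v ∈ e, v ∈ S) := by
      apply Finset.filter_congr
      intro e _
      push_neg
      rfl
    rw [heq]
    exact Finset.card_filter_add_card_filter_not _
  omega
end

section
/- Let α = 0.9401. There exists ε ∈ (0,1/2) such that 4/(3 + 12ε) ≤ 1.225 and, for every δ ∈ (0, ε], (5α(√δ − 1))/12 + 2/3 ≤ 1.225 · (1/4 + δ). -/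
/-! With `s = √δ` the claimed inequality reads `q(s) ≥ 0` for the quadratic
`q(s) = 1.225 s² - (5α/12) s + (5α/12 + 1.225/4 - 2/3)`, whose vertex lies to the right of
`3/20`. Taking `ε = (3/20)²`, `q` is decreasing on `[0, √ε]` and `q(3/20) > 0`, while
`4/(3 + 12ε) ≤ 1.225` holds because `ε ≥ 0.0222`. -/

theorem quadratic_le_quadratic_of_le {a b c r s : ℝ} (ha : 0 ≤ a) (hsr : s ≤ r)
    (hr : 2 * a * r + b ≤ 0) : a * r ^ 2 + b * r + c ≤ a * s ^ 2 + b * s + c := by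
  have hslope : a * (s + r) + b ≤ 0 := by nlinarith
  nlinarith [mul_nonneg (sub_nonneg.2 hsr) (neg_nonneg.2 hslope)]

/-- Let `α = 0.9401`.  There exists `ε ∈ (0,1/2)` such that
`4/(3 + 12ε) ≤ 1.225` and, for every `δ ∈ (0, ε]`,
`(5α(√δ − 1))/12 + 2/3 ≤ 1.225 · (1/4 + δ)`. -/
theorem approximation_ratio_numerics :
    ∃ ε : ℝ, 0 < ε ∧ ε < 1 / 2 ∧ 4 / (3 + 12 * ε) ≤ 1.225 ∧
      ∀ δ : ℝ, 0 < δ → δ ≤ ε →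
        5 * 0.9401 * (Real.sqrt δ - 1) / 12 + 2 / 3 ≤ 1.225 * (1 / 4 + δ) := by
  refine ⟨(3 / 20) ^ 2, by norm_num, by norm_num, by norm_num, fun δ hδ hδε => ?_⟩
  have hsqrt : Real.sqrt δ ≤ 3 / 20 := Real.sqrt_le_iff.2 ⟨by norm_num, hδε⟩
  have hdecr := quadratic_le_quadratic_of_le (a := 1.225) (b := -(5 * 0.9401 / 12))
    (c := 5 * 0.9401 / 12 + 1.225 / 4 - 2 / 3) (by norm_num) hsqrt (by norm_num)
  linarith [Real.sq_sqrt hδ.le]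
end
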